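/- arXiv:1212.1833 — 5 statements merged into one kernel-verified Lean document; each statement's English description precedes it below -/
import Mathlib

section
/- Let M be a finitely generated left Aₙ(K)-module, ψ_M(t) = a_d t^d + … + a₁t + a₀ the Bernstein polynomial associated with a finite system of generators of M (so ψ_M(r) = dim_K M_r for all large r, where (M_r) is the natural filtration). Then the degree d of ψ_M and the integer d!·a_d do not depend on the choice of the finite system of generators of M. -/
open scoped BigOperators

set_option maxHeartbeats 1000000
set_option synthInstance.maxHeartbeats 400000

/-- The operator of multiplication by the variable `xᵢ` on `K[x₁,…,xₙ]`. -/
noncomputable def mulX (K : Type*) [CommRing K] (n : ℕ) (i : Fin n) :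
    Module.End K (MvPolynomial (Fin n) K) :=
  LinearMap.mulLeft K (MvPolynomial.X i)

/-- The partial differentiation operator `∂ᵢ` on `K[x₁,…,xₙ]`. -/
noncomputable def pdOp (K : Type*) [CommRing K] (n : ℕ) (i : Fin n) :
    Module.End K (MvPolynomial (Fin n) K) :=
  (MvPolynomial.pderiv (R := K) i).toLinearMap

/-- The Weyl algebra `Aₙ(K)`: the `K`-subalgebra of `End_K K[x₁,…,xₙ]`
generated by the multiplication operators `xᵢ` and the derivations `∂ᵢ`. -/
noncomputable def WeylAlgebra (K : Type*) [CommRing K] (n : ℕ) :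
    Subalgebra K (Module.End K (MvPolynomial (Fin n) K)) :=
  Algebra.adjoin K (Set.range (mulX K n) ∪ Set.range (pdOp K n))

/-- The monomial `x^α ∂^β` as an endomorphism of `K[x₁,…,xₙ]`. -/
noncomputable def wMonEnd (K : Type*) [CommRing K] (n : ℕ) (α β : Fin n → ℕ) :
    Module.End K (MvPolynomial (Fin n) K) :=
  (List.ofFn fun i => mulX K n i ^ α i).prod * (List.ofFn fun i => pdOp K n i ^ β i).prod

lemma wMonEnd_mem (K : Type*) [CommRing K] (n : ℕ) (α β : Fin n → ℕ) :
    wMonEnd K n α β ∈ WeylAlgebra K n := by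
  apply mul_mem
  · apply list_prod_mem
    intro D hD
    obtain ⟨i, rfl⟩ := List.mem_ofFn.mp hD
    exact pow_mem (Algebra.subset_adjoin (Set.mem_union_left _ (Set.mem_range_self i))) _
  · apply list_prod_mem
    intro D hD
    obtain ⟨i, rfl⟩ := List.mem_ofFn.mp hD
    exact pow_mem (Algebra.subset_adjoin (Set.mem_union_right _ (Set.mem_range_self i))) _

/-- The monomial `x^α ∂^β` as an element of the Weyl algebra. -/
noncomputable def wMon (K : Type*) [CommRing K] (n : ℕ) (α β : Fin n → ℕ) :
    WeylAlgebra K n :=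
  ⟨wMonEnd K n α β, wMonEnd_mem K n α β⟩

/-- The `r`-th component `W_r` of the Bernstein filtration of `Aₙ(K)`:
the `K`-span of the monomials `x^α ∂^β` with `|α| + |β| ≤ r`. -/
noncomputable def bernW (K : Type*) [Field K] (n : ℕ) (r : ℕ) :
    Submodule K (WeylAlgebra K n) :=
  Submodule.span K {D | ∃ α β : Fin n → ℕ,
    (∑ i, α i) + (∑ i, β i) ≤ r ∧ D = wMon K n α β}

/-- The natural (Bernstein) filtration `M_r = Σᵢ W_r gᵢ` of a module over
the Weyl algebra associated with a system of generators `g`. -/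
noncomputable def bernFil (K : Type*) [Field K] (n : ℕ) (M : Type*) [AddCommGroup M]
    [Module (WeylAlgebra K n) M] [Module K M] [IsScalarTower K (WeylAlgebra K n) M]
    (p : ℕ) (g : Fin p → M) (r : ℕ) : Submodule K M :=
  Submodule.span K {x | ∃ (α β : Fin n → ℕ) (j : Fin p),
    (∑ i, α i) + (∑ i, β i) ≤ r ∧ x = wMon K n α β • g j}

/-- The natural bifiltration `M_{rs} = Σᵢ W_{rs} gᵢ`. -/
noncomputable def biFil (K : Type*) [Field K] (n : ℕ) (M : Type*) [AddCommGroup M]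
    [Module (WeylAlgebra K n) M] [Module K M] [IsScalarTower K (WeylAlgebra K n) M]
    (p : ℕ) (g : Fin p → M) (r s : ℕ) : Submodule K M :=
  Submodule.span K {x | ∃ (α β : Fin n → ℕ) (j : Fin p),
    (∑ i, α i) ≤ r ∧ (∑ i, β i) ≤ s ∧ x = wMon K n α β • g j}


/-!
If both systems generate `M`, each `gⱼ` lies in some step `M'_s` of the filtration defined by the
other system. Multiplication by `xᵢ` or by `∂ᵢ` raises the index of the filtration by at most one
(for `∂ᵢ` this is the commutation rule `∂ᵢ x^α ∂^β = x^α ∂^{β+eᵢ} + αᵢ x^{α-eᵢ} ∂^β`), so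
`x^α ∂^β` raises it by at most `|α| + |β|`, and therefore `M_r ⊆ M'_{r+s}`; symmetrically
`M'_r ⊆ M_{r+s'}`. Thus `ψ(r) ≤ ψ'(r + s)` and `ψ'(r) ≤ ψ(r + s')` for large `r`. Eventual
domination between eventually nonnegative polynomials orders the pairs (degree, leading
coefficient) lexicographically, and shifting the argument changes neither, so the two pairs
coincide.
-/

namespace List

variable {M : Type*} [Monoid M] {m : ℕ} {f : Fin m → M}

lemma prod_ofFn_eq_noncommProd (f : Fin m → M) (comm) :
    (ofFn f).prod = Finset.univ.noncommProd f comm := by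
  simp only [Finset.noncommProd, Fin.univ_val_map, Multiset.noncommProd_coe]

lemma prod_ofFn_pow_add (hf : ∀ i j, Commute (f i) (f j)) (β γ : Fin m → ℕ) :
    (ofFn fun i => f i ^ (β i + γ i)).prod =
      (ofFn fun i => f i ^ β i).prod * (ofFn fun i => f i ^ γ i).prod := by
  have comm (k : Fin m → ℕ) : Set.Pairwise ↑(Finset.univ : Finset (Fin m))
      fun i j => Commute (f i ^ k i) (f j ^ k j) := fun i _ j _ _ => (hf i j).pow_pow _ _
  simp only [pow_add, prod_ofFn_eq_noncommProd _ (comm _)]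
  exact (prod_ofFn_eq_noncommProd _ _).trans <| Finset.noncommProd_mul_distrib _ _ (comm β)
    (comm γ) fun i _ j _ _ => (hf i j).pow_pow _ _

lemma prod_ofFn_pow_single (hf : ∀ i j, Commute (f i) (f j)) (i : Fin m) :
    (ofFn fun k => f k ^ (Pi.single i 1 : Fin m → ℕ) k).prod = f i := by
  have hrest : ∀ k ∈ Finset.univ.erase i, f k ^ (Pi.single i 1 : Fin m → ℕ) k = 1 :=
    fun k hk => by rw [Pi.single_eq_of_ne (Finset.ne_of_mem_erase hk), pow_zero]
  have comm : Set.Pairwise ↑(Finset.univ : Finset (Fin m))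
      (Function.onFun Commute fun k => f k ^ (Pi.single i 1 : Fin m → ℕ) k) :=
    fun j _ k _ _ => (hf j k).pow_pow _ _
  rw [prod_ofFn_eq_noncommProd _ comm, ← Finset.mul_noncommProd_erase _ (Finset.mem_univ i),
    Pi.single_eq_same, pow_one]
  exact (congrArg (f i * ·) ((Finset.noncommProd_eq_pow_card _ _ _ 1 hrest).trans
    (one_pow _))).trans (mul_one _)

end List

section Operators

open MvPolynomial

variable (K : Type*) [CommRing K] (n : ℕ)

lemma mulX_eq_lmul (i : Fin n) : mulX K n i = Algebra.lmul K _ (X i) := rfl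

lemma mulX_commute (i j : Fin n) : Commute (mulX K n i) (mulX K n j) :=
  (Commute.all (X i) (X j)).map (Algebra.lmul K (MvPolynomial (Fin n) K))

lemma pdOp_commute (i j : Fin n) : Commute (pdOp K n i) (pdOp K n j) := by
  classical
  have hbracket : ⁅pderiv i, pderiv j⁆ = (0 : Derivation K (MvPolynomial (Fin n) K) _) :=
    derivation_ext fun k => by
      rw [Derivation.commutator_apply, pderiv_X, pderiv_X, Pi.single_apply, Pi.single_apply]
      split_ifs <;> simp
  refine LinearMap.ext fun f => sub_eq_zero.mp ?_
  simpa [pdOp, Derivation.commutator_apply] using congr($hbracket f)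

lemma prod_ofFn_mulX_pow (α : Fin n → ℕ) :
    (List.ofFn fun i => mulX K n i ^ α i).prod =
      Algebra.lmul K _ (monomial (Finsupp.equivFunOnFinite.symm α) 1) := by
  rw [monomial_eq, C_1, one_mul, Finsupp.prod_fintype _ _ fun _ => pow_zero _, ← Fin.prod_ofFn,
    map_list_prod, List.map_ofFn]
  simp only [Function.comp_def, mulX_eq_lmul, map_pow, Finsupp.coe_equivFunOnFinite_symm]

lemma pderiv_monomial_one (i : Fin n) (α : Fin n → ℕ) :
    pderiv i (monomial (Finsupp.equivFunOnFinite.symm α) (1 : K)) =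
      (α i : K) • monomial (Finsupp.equivFunOnFinite.symm (α - Pi.single i 1)) 1 := by
  classical
  have hexp : Finsupp.equivFunOnFinite.symm α - Finsupp.single i 1 =
      Finsupp.equivFunOnFinite.symm (α - Pi.single i 1) := by
    ext k
    simp [Finsupp.single_apply, Pi.single_apply, eq_comm]
  rw [pderiv_monomial, smul_monomial, one_mul, smul_eq_mul, mul_one, hexp]
  rfl

lemma pdOp_mul_lmul (i : Fin n) (f : MvPolynomial (Fin n) K) :
    pdOp K n i * Algebra.lmul K _ f =
      Algebra.lmul K _ f * pdOp K n i + Algebra.lmul K _ (pderiv i f) :=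
  LinearMap.ext fun g => by simp [pdOp, Derivation.leibniz, add_comm, mul_comm]

lemma mulX_mul_wMonEnd (i : Fin n) (α β : Fin n → ℕ) :
    mulX K n i * wMonEnd K n α β = wMonEnd K n (α + Pi.single i 1) β := by
  rw [wMonEnd, wMonEnd, ← mul_assoc]
  congr 1
  simp only [Pi.add_apply, add_comm (α _)]
  rw [List.prod_ofFn_pow_add (mulX_commute K n), List.prod_ofFn_pow_single (mulX_commute K n)]

lemma pdOp_mul_wMonEnd (i : Fin n) (α β : Fin n → ℕ) :
    pdOp K n i * wMonEnd K n α β =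
      wMonEnd K n α (β + Pi.single i 1) + (α i : K) • wMonEnd K n (α - Pi.single i 1) β := by
  have hD : pdOp K n i * (List.ofFn fun k => pdOp K n k ^ β k).prod =
      (List.ofFn fun k => pdOp K n k ^ (β + Pi.single i 1 : Fin n → ℕ) k).prod := by
    simp only [Pi.add_apply, add_comm (β _)]
    rw [List.prod_ofFn_pow_add (pdOp_commute K n), List.prod_ofFn_pow_single (pdOp_commute K n)]
  simp only [wMonEnd, prod_ofFn_mulX_pow, ← mul_assoc, pdOp_mul_lmul, add_mul,
    pderiv_monomial_one, map_smul, smul_mul_assoc]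
  rw [mul_assoc _ (pdOp K n i), hD]

end Operators

namespace WeylAlgebra

variable (K : Type*) [CommRing K] (n : ℕ)

noncomputable def mulXW (i : Fin n) : WeylAlgebra K n :=
  ⟨mulX K n i, Algebra.subset_adjoin (Or.inl ⟨i, rfl⟩)⟩

noncomputable def pdOpW (i : Fin n) : WeylAlgebra K n :=
  ⟨pdOp K n i, Algebra.subset_adjoin (Or.inr ⟨i, rfl⟩)⟩

lemma wMon_eq_prod (α β : Fin n → ℕ) :
    wMon K n α β = (List.ofFn fun i => mulXW K n i ^ α i).prod *
      (List.ofFn fun i => pdOpW K n i ^ β i).prod := by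
  apply Subtype.ext
  simp [wMon, wMonEnd, mulXW, pdOpW, List.map_ofFn, Function.comp_def]

lemma wMon_zero_zero : wMon K n 0 0 = 1 := by
  simp [wMon_eq_prod]

lemma mulXW_mul_wMon (i : Fin n) (α β : Fin n → ℕ) :
    mulXW K n i * wMon K n α β = wMon K n (α + Pi.single i 1) β :=
  Subtype.ext (mulX_mul_wMonEnd K n i α β)

lemma pdOpW_mul_wMon (i : Fin n) (α β : Fin n → ℕ) :
    pdOpW K n i * wMon K n α β =
      wMon K n α (β + Pi.single i 1) + (α i : K) • wMon K n (α - Pi.single i 1) β :=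
  Subtype.ext (pdOp_mul_wMonEnd K n i α β)

end WeylAlgebra

section BernsteinFiltration

open WeylAlgebra

variable {K : Type*} [Field K] {n : ℕ} {M : Type*} [AddCommGroup M] [Module (WeylAlgebra K n) M]
  [Module K M] [IsScalarTower K (WeylAlgebra K n) M] {p : ℕ} (g : Fin p → M)

lemma bernFil_mono {r s : ℕ} (hrs : r ≤ s) : bernFil K n M p g r ≤ bernFil K n M p g s :=
  Submodule.span_mono fun _ ⟨α, β, j, hd, hx⟩ => ⟨α, β, j, hd.trans hrs, hx⟩

lemma wMon_smul_mem_bernFil {α β : Fin n → ℕ} {r : ℕ} (j : Fin p)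
    (hd : (∑ i, α i) + (∑ i, β i) ≤ r) : wMon K n α β • g j ∈ bernFil K n M p g r :=
  Submodule.subset_span ⟨α, β, j, hd, rfl⟩

lemma mem_bernFil_zero (j : Fin p) : g j ∈ bernFil K n M p g 0 := by
  simpa [wMon_zero_zero] using wMon_smul_mem_bernFil (K := K) (n := n) g (α := 0) (β := 0) j
    (by simp)

instance finiteDimensional_bernFil (r : ℕ) : FiniteDimensional K (bernFil K n M p g r) := by
  refine FiniteDimensional.span_of_finite K ?_
  set B : Set (Fin n → ℕ) := Set.Iic fun _ => r
  have hB : {α : Fin n → ℕ | ∑ i, α i ≤ r} ⊆ B := fun α hα i =>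
    (Finset.single_le_sum (fun k _ => Nat.zero_le (α k)) (Finset.mem_univ i)).trans hα
  have hfin : ((fun t : ((Fin n → ℕ) × (Fin n → ℕ)) × Fin p => wMon K n t.1.1 t.1.2 • g t.2) ''
      ((B ×ˢ B) ×ˢ Set.univ)).Finite :=
    (((Set.finite_Iic _).prod (Set.finite_Iic _)).prod Set.finite_univ).image _
  refine hfin.subset ?_
  rintro _ ⟨α, β, j, hd, rfl⟩
  exact ⟨((α, β), j),
    ⟨⟨hB (show ∑ i, α i ≤ r by omega), hB (show ∑ i, β i ≤ r by omega)⟩, trivial⟩, rfl⟩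

def RaisesBernFil (r : ℕ) (u : WeylAlgebra K n) : Prop :=
  ∀ s, ∀ x ∈ bernFil K n M p g s, u • x ∈ bernFil K n M p g (r + s)

namespace RaisesBernFil

variable {g}

lemma mono {r r' : ℕ} {u : WeylAlgebra K n} (hrr' : r ≤ r') (hu : RaisesBernFil g r u) :
    RaisesBernFil g r' u :=
  fun s x hx => bernFil_mono g (by omega) (hu s x hx)

lemma add {r : ℕ} {u v : WeylAlgebra K n} (hu : RaisesBernFil g r u) (hv : RaisesBernFil g r v) :
    RaisesBernFil g r (u + v) :=
  fun s x hx => by rw [add_smul]; exact add_mem (hu s x hx) (hv s x hx)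

lemma mul {a b : ℕ} {u v : WeylAlgebra K n} (hu : RaisesBernFil g a u)
    (hv : RaisesBernFil g b v) : RaisesBernFil g (a + b) (u * v) :=
  fun s x hx => by rw [mul_smul, add_assoc]; exact hu _ _ (hv s x hx)

lemma one : RaisesBernFil g 0 (1 : WeylAlgebra K n) :=
  fun s x hx => by rwa [one_smul, zero_add]

lemma algebraMap (c : K) : RaisesBernFil g 0 (algebraMap K (WeylAlgebra K n) c) :=
  fun s x hx => by rw [algebraMap_smul, zero_add]; exact Submodule.smul_mem _ c hx

lemma pow {u : WeylAlgebra K n} (hu : RaisesBernFil g 1 u) (k : ℕ) :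
    RaisesBernFil g k (u ^ k) := by
  induction k with
  | zero => simpa using one
  | succ k ih => rw [pow_succ]; exact ih.mul hu

lemma prod_ofFn_pow {m : ℕ} {f : Fin m → WeylAlgebra K n} (hf : ∀ i, RaisesBernFil g 1 (f i))
    (k : Fin m → ℕ) : RaisesBernFil g (∑ i, k i) (List.ofFn fun i => f i ^ k i).prod := by
  induction m with
  | zero => simpa using one
  | succ m ih =>
    rw [List.ofFn_succ, List.prod_cons, Fin.sum_univ_succ]
    exact (pow (hf 0) _).mul (ih (fun i => hf i.succ) _)

lemma of_wMon_smul {r : ℕ} {u : WeylAlgebra K n}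
    (hu : ∀ α β j, u • (wMon K n α β • g j) ∈ bernFil K n M p g (r + ((∑ i, α i) + ∑ i, β i))) :
    RaisesBernFil g r u := by
  intro s x hx
  induction hx using Submodule.span_induction with
  | mem x hx =>
    obtain ⟨α, β, j, hd, rfl⟩ := hx
    exact bernFil_mono g (by omega) (hu α β j)
  | zero => rw [smul_zero]; exact zero_mem _
  | add x y _ _ hx hy => rw [smul_add]; exact add_mem hx hy
  | smul c x _ hx => rw [smul_comm]; exact Submodule.smul_mem _ c hx

end RaisesBernFil

lemma sum_add_single (α : Fin n → ℕ) (i : Fin n) :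
    ∑ k, (α + Pi.single i 1 : Fin n → ℕ) k = (∑ k, α k) + 1 := by
  simp [Finset.sum_add_distrib]

lemma raisesBernFil_mulXW (i : Fin n) : RaisesBernFil g 1 (mulXW K n i) :=
  RaisesBernFil.of_wMon_smul fun α β j => by
    rw [← mul_smul, mulXW_mul_wMon]
    exact wMon_smul_mem_bernFil g j (by rw [sum_add_single]; omega)

lemma raisesBernFil_pdOpW (i : Fin n) : RaisesBernFil g 1 (pdOpW K n i) :=
  RaisesBernFil.of_wMon_smul fun α β j => by
    rw [← mul_smul, pdOpW_mul_wMon, add_smul, smul_assoc]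
    have hα : ∑ k, (α - Pi.single i 1 : Fin n → ℕ) k ≤ ∑ k, α k :=
      Finset.sum_le_sum fun k _ => Nat.sub_le _ _
    exact add_mem (wMon_smul_mem_bernFil g j (by rw [sum_add_single]; omega))
      (Submodule.smul_mem _ _ (wMon_smul_mem_bernFil g j (by omega)))

lemma raisesBernFil_wMon (α β : Fin n → ℕ) :
    RaisesBernFil g ((∑ i, α i) + ∑ i, β i) (wMon K n α β) := by
  rw [wMon_eq_prod]
  exact (RaisesBernFil.prod_ofFn_pow (raisesBernFil_mulXW g) α).mul
    (RaisesBernFil.prod_ofFn_pow (raisesBernFil_pdOpW g) β)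

lemma exists_raisesBernFil (u : WeylAlgebra K n) : ∃ r, RaisesBernFil g r u := by
  obtain ⟨u, hu⟩ := u
  induction hu using Algebra.adjoin_induction with
  | mem u hu =>
    refine ⟨1, ?_⟩
    rcases hu with ⟨i, rfl⟩ | ⟨i, rfl⟩
    exacts [raisesBernFil_mulXW g i, raisesBernFil_pdOpW g i]
  | algebraMap c => exact ⟨0, RaisesBernFil.algebraMap c⟩
  | add u v _ _ hu hv =>
    obtain ⟨a, ha⟩ := hu
    obtain ⟨b, hb⟩ := hv
    exact ⟨max a b, (ha.mono (le_max_left a b)).add (hb.mono (le_max_right a b))⟩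
  | mul u v _ _ hu hv =>
    obtain ⟨a, ha⟩ := hu
    obtain ⟨b, hb⟩ := hv
    exact ⟨a + b, ha.mul hb⟩

lemma exists_mem_bernFil (hg : Submodule.span (WeylAlgebra K n) (Set.range g) = ⊤) (x : M) :
    ∃ s, x ∈ bernFil K n M p g s := by
  have hx : x ∈ Submodule.span (WeylAlgebra K n) (Set.range g) := hg ▸ Submodule.mem_top
  induction hx using Submodule.span_induction with
  | mem x hx =>
    obtain ⟨j, rfl⟩ := hx
    exact ⟨0, mem_bernFil_zero g j⟩
  | zero => exact ⟨0, zero_mem _⟩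
  | add x y _ _ hx hy =>
    obtain ⟨a, ha⟩ := hx
    obtain ⟨b, hb⟩ := hy
    exact ⟨max a b, add_mem (bernFil_mono g (le_max_left a b) ha)
      (bernFil_mono g (le_max_right a b) hb)⟩
  | smul u x _ hx =>
    obtain ⟨s, hs⟩ := hx
    obtain ⟨r, hr⟩ := exists_raisesBernFil g u
    exact ⟨r + s, hr s x hs⟩

lemma exists_bernFil_le_bernFil_add {q : ℕ} (h : Fin q → M)
    (hh : Submodule.span (WeylAlgebra K n) (Set.range h) = ⊤) :
    ∃ s, ∀ r, bernFil K n M p g r ≤ bernFil K n M q h (r + s) := by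
  choose s hs using fun j => exists_mem_bernFil h hh (g j)
  refine ⟨Finset.univ.sup s, fun r => Submodule.span_le.mpr ?_⟩
  rintro _ ⟨α, β, j, hd, rfl⟩
  exact (raisesBernFil_wMon h α β).mono hd _ _
    (bernFil_mono h (Finset.le_sup (Finset.mem_univ j)) (hs j))

end BernsteinFiltration

namespace Polynomial

open Filter

lemma toLex_le_add_of_leadingCoeff_nonneg {R : Type*} [CommRing R] [LinearOrder R]
    [IsStrictOrderedRing R] {P D : R[X]} (hP : 0 ≤ P.leadingCoeff) (hD : 0 ≤ D.leadingCoeff) :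
    toLex (P.natDegree, P.leadingCoeff) ≤ toLex ((P + D).natDegree, (P + D).leadingCoeff) := by
  rcases lt_trichotomy P.degree D.degree with hlt | heq | hgt
  · rw [natDegree_add_eq_right_of_degree_lt hlt, leadingCoeff_add_of_degree_lt hlt]
    rcases eq_or_ne P 0 with rfl | hP0
    · rw [natDegree_zero, leadingCoeff_zero, Prod.Lex.toLex_le_toLex]
      exact (Nat.zero_le _).lt_or_eq.imp_right fun h => ⟨h, hD⟩
    · exact Prod.Lex.toLex_le_toLex.mpr (.inl (natDegree_lt_natDegree hP0 hlt))
  · rcases (add_nonneg hP hD).lt_or_eq with hpos | hzero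
    · have hdeg : (P + D).degree = P.degree := by
        rw [degree_add_eq_of_leadingCoeff_add_ne_zero hpos.ne', heq, max_self]
      rw [natDegree_eq_of_degree_eq hdeg, leadingCoeff_add_of_degree_eq heq hpos.ne']
      exact Prod.Lex.toLex_le_toLex.mpr (.inr ⟨rfl, le_add_of_nonneg_right hD⟩)
    · obtain ⟨rfl, rfl⟩ : P = 0 ∧ D = 0 := by
        simpa using (add_eq_zero_iff_of_nonneg hP hD).mp hzero.symm
      simp
  · rw [natDegree_add_eq_left_of_degree_lt hgt, leadingCoeff_add_of_degree_lt' hgt]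

variable {𝕜 : Type*} [NormedField 𝕜] [LinearOrder 𝕜] [IsStrictOrderedRing 𝕜] [OrderTopology 𝕜]
  [Archimedean 𝕜]

lemma leadingCoeff_nonneg_of_eventually_nonneg {P : 𝕜[X]}
    (hP : ∀ᶠ r : ℕ in atTop, 0 ≤ P.eval (r : 𝕜)) : 0 ≤ P.leadingCoeff := by
  by_contra! hlc
  have hneg : ∀ᶠ r : ℕ in atTop, P.eval (r : 𝕜) < 0 := by
    by_cases hdeg : 0 < P.degree
    · exact tendsto_natCast_atTop_atTop.eventually
        ((P.tendsto_atBot_of_leadingCoeff_nonpos hdeg hlc.le).eventually_lt_atBot 0)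
    · rw [eq_C_of_degree_le_zero (not_lt.mp hdeg)] at hlc ⊢
      exact Eventually.of_forall fun _ => by simpa using hlc
  obtain ⟨r, hr₁, hr₂⟩ := (hP.and hneg).exists
  exact hr₁.not_gt hr₂

lemma toLex_le_of_eventually_le {P Q : 𝕜[X]} (hP : ∀ᶠ r : ℕ in atTop, 0 ≤ P.eval (r : 𝕜))
    (hPQ : ∀ᶠ r : ℕ in atTop, P.eval (r : 𝕜) ≤ Q.eval (r : 𝕜)) :
    toLex (P.natDegree, P.leadingCoeff) ≤ toLex (Q.natDegree, Q.leadingCoeff) := by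
  have hQP : 0 ≤ (Q - P).leadingCoeff := leadingCoeff_nonneg_of_eventually_nonneg <| by
    filter_upwards [hPQ] with r hr
    simpa using hr
  simpa using toLex_le_add_of_leadingCoeff_nonneg (leadingCoeff_nonneg_of_eventually_nonneg hP) hQP

lemma natDegree_eq_and_leadingCoeff_eq_of_le_shift {P Q : 𝕜[X]} (s₁ s₂ : ℕ)
    (hP : ∀ᶠ r : ℕ in atTop, 0 ≤ P.eval (r : 𝕜)) (hQ : ∀ᶠ r : ℕ in atTop, 0 ≤ Q.eval (r : 𝕜))
    (hPQ : ∀ᶠ r : ℕ in atTop, P.eval (r : 𝕜) ≤ Q.eval ((r + s₁ : ℕ) : 𝕜))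
    (hQP : ∀ᶠ r : ℕ in atTop, Q.eval (r : 𝕜) ≤ P.eval ((r + s₂ : ℕ) : 𝕜)) :
    P.natDegree = Q.natDegree ∧ P.leadingCoeff = Q.leadingCoeff := by
  have le_shift {P Q : 𝕜[X]} (s : ℕ) (hP : ∀ᶠ r : ℕ in atTop, 0 ≤ P.eval (r : 𝕜))
      (hPQ : ∀ᶠ r : ℕ in atTop, P.eval (r : 𝕜) ≤ Q.eval ((r + s : ℕ) : 𝕜)) :
      toLex (P.natDegree, P.leadingCoeff) ≤ toLex (Q.natDegree, Q.leadingCoeff) := by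
    simpa [natDegree_taylor, leadingCoeff_taylor] using
      toLex_le_of_eventually_le (Q := taylor (s : 𝕜) Q) hP (by simpa [taylor_eval] using hPQ)
  exact Prod.ext_iff.mp <| toLex.injective <| (le_shift s₁ hP hPQ).antisymm (le_shift s₂ hQ hQP)

end Polynomial

theorem bernstein_polynomial_invariants_general
    (K : Type*) [Field K] (n : ℕ)
    (M : Type*) [AddCommGroup M] [Module (WeylAlgebra K n) M]
    [Module K M] [IsScalarTower K (WeylAlgebra K n) M]
    (p q : ℕ) (g : Fin p → M) (h : Fin q → M)
    (hg : Submodule.span (WeylAlgebra K n) (Set.range g) = ⊤)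
    (hh : Submodule.span (WeylAlgebra K n) (Set.range h) = ⊤)
    (ψ₁ ψ₂ : Polynomial ℚ)
    (hψ₁ : ∃ r₀ : ℕ, ∀ r : ℕ, r₀ ≤ r →
      ψ₁.eval (r : ℚ) = Module.finrank K (bernFil K n M p g r))
    (hψ₂ : ∃ r₀ : ℕ, ∀ r : ℕ, r₀ ≤ r →
      ψ₂.eval (r : ℚ) = Module.finrank K (bernFil K n M q h r)) :
    ψ₁.natDegree = ψ₂.natDegree ∧
      (ψ₁.natDegree.factorial : ℚ) * ψ₁.leadingCoeff =
        (ψ₂.natDegree.factorial : ℚ) * ψ₂.leadingCoeff := by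
  replace hψ₁ := Filter.eventually_atTop.mpr hψ₁
  replace hψ₂ := Filter.eventually_atTop.mpr hψ₂
  obtain ⟨s₁, hgh⟩ := exists_bernFil_le_bernFil_add g h hh
  obtain ⟨s₂, hhg⟩ := exists_bernFil_le_bernFil_add h g hg
  have hle {P Q : Polynomial ℚ} {A B : ℕ → Submodule K M} {s : ℕ} (hAB : ∀ r, A r ≤ B (r + s))
      [∀ r, FiniteDimensional K (B r)]
      (hPA : ∀ᶠ r : ℕ in Filter.atTop, P.eval (r : ℚ) = Module.finrank K (A r))
      (hQB : ∀ᶠ r : ℕ in Filter.atTop, Q.eval (r : ℚ) = Module.finrank K (B r)) :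
      ∀ᶠ r : ℕ in Filter.atTop, P.eval (r : ℚ) ≤ Q.eval ((r + s : ℕ) : ℚ) := by
    filter_upwards [hPA, Filter.tendsto_add_atTop_nat s |>.eventually hQB] with r hA hB
    rw [hA, hB]
    exact_mod_cast Submodule.finrank_mono (hAB r)
  obtain ⟨hdeg, hlc⟩ := Polynomial.natDegree_eq_and_leadingCoeff_eq_of_le_shift s₁ s₂
    (hψ₁.mono fun r hr => hr ▸ Nat.cast_nonneg _) (hψ₂.mono fun r hr => hr ▸ Nat.cast_nonneg _)
    (hle hgh hψ₁ hψ₂) (hle hhg hψ₂ hψ₁)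
  exact ⟨hdeg, by rw [hdeg, hlc]⟩

/-- The degree `d` of the Bernstein polynomial of a finitely
generated `Aₙ(K)`-module `M` and the integer `d! · a_d` (where `a_d` is the
leading coefficient) do not depend on the choice of the finite system of
generators of `M`. -/
theorem bernstein_polynomial_invariants
    (K : Type*) [Field K] [CharZero K] (n : ℕ) (hn : 1 ≤ n)
    (M : Type*) [AddCommGroup M] [Module (WeylAlgebra K n) M]
    [Module K M] [IsScalarTower K (WeylAlgebra K n) M]
    (p q : ℕ) (g : Fin p → M) (h : Fin q → M)
    (hg : Submodule.span (WeylAlgebra K n) (Set.range g) = ⊤)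
    (hh : Submodule.span (WeylAlgebra K n) (Set.range h) = ⊤)
    (ψ₁ ψ₂ : Polynomial ℚ)
    (hψ₁ : ∃ r₀ : ℕ, ∀ r : ℕ, r₀ ≤ r →
      ψ₁.eval (r : ℚ) = Module.finrank K (bernFil K n M p g r))
    (hψ₂ : ∃ r₀ : ℕ, ∀ r : ℕ, r₀ ≤ r →
      ψ₂.eval (r : ℚ) = Module.finrank K (bernFil K n M q h r)) :
    ψ₁.natDegree = ψ₂.natDegree ∧
      (ψ₁.natDegree.factorial : ℚ) * ψ₁.leadingCoeff =
        (ψ₂.natDegree.factorial : ℚ) * ψ₂.leadingCoeff :=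
  bernstein_polynomial_invariants_general K n M p q g h hg hh ψ₁ ψ₂ hψ₁ hψ₂
end

section
/- Let m and n be positive integers and A ⊆ ℕ^{m+n}. Then there exists a numerical polynomial ω_A(t₁,t₂) in two variables such that (i) ω_A(r,s) = Card V_A(r,s) for all sufficiently large r, s ∈ ℕ, and (ii) deg ω_A ≤ m+n, deg_{t₁} ω_A ≤ m, and deg_{t₂} ω_A ≤ n. -/
open scoped BigOperators

/-- A polynomial `f(t₁,t₂) ∈ ℚ[t₁,t₂]` is numerical if `f(r,s) ∈ ℤ` for all
sufficiently large integers `r, s`. -/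
def IsNumerical2 (f : MvPolynomial (Fin 2) ℚ) : Prop :=
  ∃ r₀ s₀ : ℤ, ∀ r s : ℤ, r₀ ≤ r → s₀ ≤ s →
    ∃ z : ℤ, MvPolynomial.eval ![(r : ℚ), (s : ℚ)] f = z

/-- The polynomial `C(t+k, k) = (t+k)(t+k-1)⋯(t+1)/k!` in one variable `t`. -/
noncomputable def binomP (k : ℕ) : Polynomial ℚ :=
  (k.factorial : ℚ)⁻¹ • ∏ j ∈ Finset.range k, (Polynomial.X + Polynomial.C ((j : ℚ) + 1))

/-- The polynomial `C(t+k-c, k) = (t+k-c)(t+k-1-c)⋯(t+1-c)/k!` in `t`. -/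
noncomputable def binomShift (k : ℕ) (c : ℤ) : Polynomial ℚ :=
  (k.factorial : ℚ)⁻¹ • ∏ j ∈ Finset.range k, (Polynomial.X + Polynomial.C ((j : ℚ) + 1 - c))

/-- The two-variable polynomial `C(t₁+i, i)·C(t₂+j, j)`. -/
noncomputable def binom2 (i j : ℕ) : MvPolynomial (Fin 2) ℚ :=
  Polynomial.aeval (MvPolynomial.X 0) (binomP i) *
    Polynomial.aeval (MvPolynomial.X 1) (binomP j)

/-- `C(t₁+m-b, m)·C(t₂+n-c, n)` as a two-variable polynomial. -/
noncomputable def binom2Shift (m : ℕ) (b : ℤ) (n : ℕ) (c : ℤ) : MvPolynomial (Fin 2) ℚ :=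
  Polynomial.aeval (MvPolynomial.X 0) (binomShift m b) *
    Polynomial.aeval (MvPolynomial.X 1) (binomShift n c)

/-- For `A ⊆ ℕ^{m+n}`, the set `V_A` of tuples that are not `≥` (componentwise)
any element of `A`. -/
def VA (m n : ℕ) (A : Set (Fin (m + n) → ℕ)) : Set (Fin (m + n) → ℕ) :=
  {v | ∀ a ∈ A, ¬ a ≤ v}

/-- The subset `V_A(r,s)` of `V_A` consisting of tuples whose first `m`
coordinates sum to at most `r` and last `n` coordinates sum to at most `s`. -/
def VArs (m n : ℕ) (A : Set (Fin (m + n) → ℕ)) (r s : ℕ) : Set (Fin (m + n) → ℕ) :=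
  {v | v ∈ VA m n A ∧ (∑ i : Fin m, v (Fin.castAdd n i)) ≤ r ∧
    (∑ j : Fin n, v (Fin.natAdd m j)) ≤ s}

/-- `ω` is the `(m,n)`-dimension polynomial of `A ⊆ ℕ^{m+n}`:
`ω(r,s) = Card V_A(r,s)` for all sufficiently large `r, s ∈ ℕ`. -/
def IsDimPoly (m n : ℕ) (A : Set (Fin (m + n) → ℕ)) (ω : MvPolynomial (Fin 2) ℚ) : Prop :=
  ∃ r₀ s₀ : ℕ, ∀ r s : ℕ, r₀ ≤ r → s₀ ≤ s →
    MvPolynomial.eval ![(r : ℚ), (s : ℚ)] ω = (VArs m n A r s).ncard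


/-!
By Dickson's lemma the minimal elements of `A` form a finite set `B`, and `V_A(r,s)` is the set
of points of the block simplex `{∑₁ v ≤ r, ∑₂ v ≤ s}` lying above no element of `B`.
Inclusion–exclusion over `S ⊆ B` reduces the count to the points above `sup S`: a translate of
a smaller block simplex, with `C(r - ∑₁ sup S + m, m) · C(s - ∑₂ sup S + n, n)` points once
`r, s` are large. Each of these products is the value of a product of Hilbert polynomials
`preHilbertPoly`, of bidegree `(m, n)`, hence so is their alternating sum.
-/

open Finset

theorem exists_finset_subset_forall_exists_le {α : Type*} [PartialOrder α] [WellQuasiOrderedLE α]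
    (A : Set α) : ∃ B : Finset α, ↑B ⊆ A ∧ ∀ a ∈ A, ∃ b ∈ B, b ≤ a := by
  have hpwo := Set.isPWO_of_wellQuasiOrderedLE A
  have hfin : {x | Minimal (· ∈ A) x}.Finite :=
    (setOfPred_minimal_antichain _).finite_of_partiallyWellOrderedOn
      (hpwo.mono (setOfPred_minimal_subset _))
  refine ⟨hfin.toFinset, fun b hb => (hfin.mem_toFinset.1 hb).prop, fun a ha => ?_⟩
  obtain ⟨b, hba, hb⟩ := hpwo.exists_le_minimal ha
  exact ⟨b, hfin.mem_toFinset.2 hb, hba⟩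

theorem card_filter_forall_not_le {α : Type*} [SemilatticeSup α] [OrderBot α] [DecidableEq α]
    [DecidableLE α] (W B : Finset α) :
    (#{v ∈ W | ∀ b ∈ B, ¬ b ≤ v} : ℤ) =
      ∑ S ∈ B.powerset, (-1 : ℤ) ^ #S * #{v ∈ W | S.sup id ≤ v} := by
  have indicator (v : α) : (if ∀ b ∈ B, ¬ b ≤ v then 1 else 0 : ℤ) =
      ∑ S ∈ B.powerset, (-1) ^ #S * if S.sup id ≤ v then 1 else 0 := by
    have one_sub (b : α) : (if ¬ b ≤ v then 1 else 0 : ℤ) = 1 - if b ≤ v then 1 else 0 := by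
      split_ifs <;> simp
    simp_rw [← prod_boole, one_sub, prod_sub, prod_const_one, mul_one, prod_boole,
      Finset.sup_le_iff, id]
  simp only [card_filter, Nat.cast_sum, Nat.cast_ite, Nat.cast_one, Nat.cast_zero, indicator,
    mul_sum]
  exact sum_comm

def simplex (k d : ℕ) : Finset (Fin k → ℕ) :=
  {u ∈ Fintype.piFinset fun _ => range (d + 1) | ∑ i, u i ≤ d}

theorem mem_simplex {k d : ℕ} {u : Fin k → ℕ} : u ∈ simplex k d ↔ ∑ i, u i ≤ d := by
  refine mem_filter.trans (and_iff_right_of_imp fun h => Fintype.mem_piFinset.2 fun i => ?_)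
  exact mem_range_succ_iff.2 ((single_le_sum (fun _ _ => Nat.zero_le _) (mem_univ i)).trans h)

theorem card_piAntidiag_univ_fin (k d : ℕ) :
    #(piAntidiag (univ : Finset (Fin (k + 1))) d) = (d + k).choose k := by
  rw [← map_sym_eq_piAntidiag, card_map, sym_univ, card_univ, Sym.card_sym_eq_choose,
    Fintype.card_fin, show k + 1 + d - 1 = d + k by omega, Nat.choose_symm_add]

/-- Stars and bars: adjoining the slack `d - ∑ u` as a last coordinate identifies
`simplex k d` with the tuples in `ℕ^{k+1}` summing to `d`. -/
theorem card_simplex (k d : ℕ) : #(simplex k d) = (d + k).choose k := by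
  rw [← card_piAntidiag_univ_fin]
  refine card_nbij' (fun u => Fin.snoc u (d - ∑ i, u i)) Fin.init ?_ ?_ ?_ ?_
  · intro u hu
    simp only [SetLike.mem_coe, mem_piAntidiag, Fin.sum_univ_castSucc, Fin.snoc_castSucc,
      Fin.snoc_last]
    exact ⟨Nat.add_sub_of_le (mem_simplex.1 hu), fun _ _ => mem_univ _⟩
  · intro f hf
    simp only [SetLike.mem_coe, mem_piAntidiag, Fin.sum_univ_castSucc] at hf
    exact mem_simplex.2 (hf.1 ▸ Nat.le_add_right _ _)
  · intro u _
    exact Fin.init_snoc _ _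
  · intro f hf
    simp only [SetLike.mem_coe, mem_piAntidiag, Fin.sum_univ_castSucc] at hf
    have slack : d - ∑ i, Fin.init f i = f (Fin.last k) := by
      simp only [Fin.init]
      omega
    simp only [slack, Fin.snoc_init_self]

def leftSum (m n : ℕ) (v : Fin (m + n) → ℕ) : ℕ := ∑ i : Fin m, v (Fin.castAdd n i)

def rightSum (m n : ℕ) (v : Fin (m + n) → ℕ) : ℕ := ∑ j : Fin n, v (Fin.natAdd m j)

section BlockSimplex

open Classical

variable {m n : ℕ}

theorem leftSum_add (u v : Fin (m + n) → ℕ) :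
    leftSum m n (u + v) = leftSum m n u + leftSum m n v :=
  sum_add_distrib

theorem rightSum_add (u v : Fin (m + n) → ℕ) :
    rightSum m n (u + v) = rightSum m n u + rightSum m n v :=
  sum_add_distrib

theorem leftSum_mono : Monotone (leftSum m n) :=
  fun _ _ h => sum_le_sum fun _ _ => h _

theorem rightSum_mono : Monotone (rightSum m n) :=
  fun _ _ h => sum_le_sum fun _ _ => h _

variable (m n) in
def blockSimplex (r s : ℕ) : Finset (Fin (m + n) → ℕ) :=
  (simplex m r ×ˢ simplex n s).map (Fin.appendEquiv m n).toEmbedding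

theorem mem_blockSimplex {r s : ℕ} {v : Fin (m + n) → ℕ} :
    v ∈ blockSimplex m n r s ↔ leftSum m n v ≤ r ∧ rightSum m n v ≤ s := by
  simp [blockSimplex, mem_simplex, leftSum, rightSum]

variable (m n) in
theorem card_blockSimplex (r s : ℕ) :
    #(blockSimplex m n r s) = (r + m).choose m * (s + n).choose n := by
  rw [blockSimplex, card_map, card_product, card_simplex, card_simplex]

theorem filter_le_blockSimplex {r s : ℕ} {b : Fin (m + n) → ℕ} (hr : leftSum m n b ≤ r)
    (hs : rightSum m n b ≤ s) :
    {v ∈ blockSimplex m n r s | b ≤ v} =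
      (blockSimplex m n (r - leftSum m n b) (s - rightSum m n b)).map (addLeftEmbedding b) := by
  ext v
  simp only [mem_filter, mem_map, mem_blockSimplex, addLeftEmbedding_apply]
  constructor
  · rintro ⟨⟨hvr, hvs⟩, hbv⟩
    have hv := add_tsub_cancel_of_le hbv
    have hleft := leftSum_add b (v - b)
    have hright := rightSum_add b (v - b)
    rw [hv] at hleft hright
    exact ⟨v - b, ⟨by omega, by omega⟩, hv⟩
  · rintro ⟨u, ⟨hur, hus⟩, rfl⟩
    rw [leftSum_add, rightSum_add]
    exact ⟨⟨by omega, by omega⟩, le_self_add⟩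

theorem card_filter_le_blockSimplex {r s : ℕ} {b : Fin (m + n) → ℕ} (hr : leftSum m n b ≤ r)
    (hs : rightSum m n b ≤ s) :
    #{v ∈ blockSimplex m n r s | b ≤ v} =
      (r - leftSum m n b + m).choose m * (s - rightSum m n b + n).choose n := by
  rw [filter_le_blockSimplex hr hs, card_map, card_blockSimplex]

theorem VArs_eq_filter_blockSimplex {A : Set (Fin (m + n) → ℕ)}
    {B : Finset (Fin (m + n) → ℕ)}
    (hBA : ↑B ⊆ A) (hAB : ∀ a ∈ A, ∃ b ∈ B, b ≤ a) (r s : ℕ) :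
    VArs m n A r s = ↑{v ∈ blockSimplex m n r s | ∀ b ∈ B, ¬ b ≤ v} := by
  ext v
  simp only [VArs, VA, Set.mem_ofPred_eq, coe_filter, mem_blockSimplex, leftSum, rightSum]
  constructor
  · rintro ⟨hv, hr, hs⟩
    exact ⟨⟨hr, hs⟩, fun b hb => hv b (hBA hb)⟩
  · rintro ⟨⟨hr, hs⟩, hv⟩
    refine ⟨fun a ha hav => ?_, hr, hs⟩
    obtain ⟨b, hb, hba⟩ := hAB a ha
    exact hv b hb (hba.trans hav)

theorem ncard_VArs {A : Set (Fin (m + n) → ℕ)} {B : Finset (Fin (m + n) → ℕ)}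
    (hBA : ↑B ⊆ A) (hAB : ∀ a ∈ A, ∃ b ∈ B, b ≤ a) {r s : ℕ}
    (hr : leftSum m n (B.sup id) ≤ r) (hs : rightSum m n (B.sup id) ≤ s) :
    ((VArs m n A r s).ncard : ℤ) = ∑ S ∈ B.powerset, (-1 : ℤ) ^ #S *
      ((r - leftSum m n (S.sup id) + m).choose m *
        (s - rightSum m n (S.sup id) + n).choose n) := by
  rw [VArs_eq_filter_blockSimplex hBA hAB, Set.ncard_coe_finset, card_filter_forall_not_le]
  refine sum_congr rfl fun S hS => ?_
  have hSB : S.sup id ≤ B.sup id := sup_mono (mem_powerset.1 hS)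
  rw [card_filter_le_blockSimplex ((leftSum_mono hSB).trans hr) ((rightSum_mono hSB).trans hs)]
  norm_cast

end BlockSimplex

theorem ascPochhammer_eq_prod_range (S : Type*) [CommSemiring S] (k : ℕ) :
    ascPochhammer S k = ∏ j ∈ range k, (Polynomial.X + (j : Polynomial S)) := by
  induction k with
  | zero => simp
  | succ k ih => rw [ascPochhammer_succ_right, ih, prod_range_succ]

theorem binomShift_natCast (k c : ℕ) : binomShift k c = Polynomial.preHilbertPoly ℚ k c := by
  simp only [binomShift, Polynomial.preHilbertPoly, ascPochhammer_eq_prod_range,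
    Polynomial.prod_comp]
  congr 1
  refine prod_congr rfl fun j _ => ?_
  simp only [Int.cast_natCast, map_sub, map_add, map_natCast, map_one, Polynomial.add_comp,
    Polynomial.X_comp, Polynomial.natCast_comp]
  ring

section ToMvPolynomial

variable {R σ : Type*} [CommSemiring R] (p : Polynomial R) (i : σ)

theorem Polynomial.toMvPolynomial_eq_sum :
    p.toMvPolynomial i = ∑ k ∈ range (p.natDegree + 1),
      MvPolynomial.C (p.coeff k) * MvPolynomial.X i ^ k := by
  conv_lhs => rw [p.as_sum_range_C_mul_X_pow]
  simp [map_sum]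

theorem Polynomial.degreeOf_toMvPolynomial_self_le [Nontrivial R] :
    (p.toMvPolynomial i).degreeOf i ≤ p.natDegree := by
  rw [p.toMvPolynomial_eq_sum]
  refine (MvPolynomial.degreeOf_sum_le _ _ _).trans (Finset.sup_le fun k hk => ?_)
  refine (MvPolynomial.degreeOf_C_mul_le _ _ _).trans ?_
  rw [MvPolynomial.degreeOf_X_self_pow]
  exact mem_range_succ_iff.1 hk

theorem Polynomial.degreeOf_toMvPolynomial_of_ne {j : σ} (h : j ≠ i) :
    (p.toMvPolynomial i).degreeOf j = 0 := by
  rw [p.toMvPolynomial_eq_sum, ← Nat.le_zero]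
  refine (MvPolynomial.degreeOf_sum_le _ _ _).trans (Finset.sup_le fun k _ => ?_)
  refine (MvPolynomial.degreeOf_C_mul_le _ _ _).trans ?_
  rw [MvPolynomial.degreeOf_X_pow_of_ne _ h]

theorem Polynomial.totalDegree_toMvPolynomial_le [Nontrivial R] :
    (p.toMvPolynomial i).totalDegree ≤ p.natDegree := by
  rw [p.toMvPolynomial_eq_sum]
  refine (MvPolynomial.totalDegree_finsetSum _ _).trans (Finset.sup_le fun k hk => ?_)
  refine (MvPolynomial.totalDegree_mul _ _).trans ?_
  rw [MvPolynomial.totalDegree_C, MvPolynomial.totalDegree_X_pow, zero_add]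
  exact mem_range_succ_iff.1 hk

end ToMvPolynomial

section DimensionPolynomial

open MvPolynomial

theorem binom2Shift_natCast (m n b c : ℕ) :
    binom2Shift m b n c = (Polynomial.preHilbertPoly ℚ m b).toMvPolynomial 0 *
      (Polynomial.preHilbertPoly ℚ n c).toMvPolynomial 1 := by
  rw [binom2Shift, binomShift_natCast, binomShift_natCast]
  rfl

theorem eval_binom2Shift_natCast {m n b c r s : ℕ} (hb : b ≤ r) (hc : c ≤ s) :
    eval ![(r : ℚ), (s : ℚ)] (binom2Shift m b n c) =
      (r - b + m).choose m * (s - c + n).choose n := by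
  rw [binom2Shift_natCast, eval_mul, eval_toMvPolynomial, eval_toMvPolynomial,
    Matrix.cons_val_zero, Matrix.cons_val_one, Matrix.cons_val_zero,
    Polynomial.preHilbertPoly_eq_choose_sub_add _ _ hb,
    Polynomial.preHilbertPoly_eq_choose_sub_add _ _ hc]

theorem totalDegree_binom2Shift_natCast_le (m n b c : ℕ) :
    (binom2Shift m b n c).totalDegree ≤ m + n := by
  rw [binom2Shift_natCast]
  refine (totalDegree_mul _ _).trans (add_le_add ?_ ?_) <;>
    exact (Polynomial.totalDegree_toMvPolynomial_le _ _).trans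
      (Polynomial.natDegree_preHilbertPoly ℚ _ _).le

theorem degreeOf_zero_binom2Shift_natCast_le (m n b c : ℕ) :
    (binom2Shift m b n c).degreeOf 0 ≤ m := by
  rw [binom2Shift_natCast]
  refine (degreeOf_mul_le _ _ _).trans ?_
  rw [Polynomial.degreeOf_toMvPolynomial_of_ne _ _ zero_ne_one, add_zero]
  exact (Polynomial.degreeOf_toMvPolynomial_self_le _ _).trans
    (Polynomial.natDegree_preHilbertPoly ℚ _ _).le

theorem degreeOf_one_binom2Shift_natCast_le (m n b c : ℕ) :
    (binom2Shift m b n c).degreeOf 1 ≤ n := by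
  rw [binom2Shift_natCast]
  refine (degreeOf_mul_le _ _ _).trans ?_
  rw [Polynomial.degreeOf_toMvPolynomial_of_ne _ _ one_ne_zero, zero_add]
  exact (Polynomial.degreeOf_toMvPolynomial_self_le _ _).trans
    (Polynomial.natDegree_preHilbertPoly ℚ _ _).le

variable {m n : ℕ}

noncomputable def dimPoly (B : Finset (Fin (m + n) → ℕ)) : MvPolynomial (Fin 2) ℚ :=
  ∑ S ∈ B.powerset, C ((-1) ^ #S) *
    binom2Shift m (leftSum m n (S.sup id)) n (rightSum m n (S.sup id))

theorem totalDegree_dimPoly_le (B : Finset (Fin (m + n) → ℕ)) :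
    (dimPoly B).totalDegree ≤ m + n := by
  refine (totalDegree_finsetSum _ _).trans (Finset.sup_le fun S _ => ?_)
  refine (totalDegree_mul _ _).trans ?_
  rw [totalDegree_C, zero_add]
  exact totalDegree_binom2Shift_natCast_le _ _ _ _

theorem degreeOf_zero_dimPoly_le (B : Finset (Fin (m + n) → ℕ)) :
    (dimPoly B).degreeOf 0 ≤ m :=
  (degreeOf_sum_le _ _ _).trans (Finset.sup_le fun _ _ =>
    (degreeOf_C_mul_le _ _ _).trans (degreeOf_zero_binom2Shift_natCast_le _ _ _ _))

theorem degreeOf_one_dimPoly_le (B : Finset (Fin (m + n) → ℕ)) :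
    (dimPoly B).degreeOf 1 ≤ n :=
  (degreeOf_sum_le _ _ _).trans (Finset.sup_le fun _ _ =>
    (degreeOf_C_mul_le _ _ _).trans (degreeOf_one_binom2Shift_natCast_le _ _ _ _))

theorem isDimPoly_dimPoly {A : Set (Fin (m + n) → ℕ)} {B : Finset (Fin (m + n) → ℕ)}
    (hBA : ↑B ⊆ A) (hAB : ∀ a ∈ A, ∃ b ∈ B, b ≤ a) : IsDimPoly m n A (dimPoly B) := by
  refine ⟨leftSum m n (B.sup id), rightSum m n (B.sup id), fun r s hr hs => ?_⟩
  have hsum := ncard_VArs hBA hAB hr hs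
  rw [← Int.cast_natCast (VArs m n A r s).ncard, hsum, dimPoly, map_sum]
  push_cast
  refine Finset.sum_congr rfl fun S hS => ?_
  have hSB : S.sup id ≤ B.sup id := Finset.sup_mono (Finset.mem_powerset.1 hS)
  rw [eval_mul, eval_C, eval_binom2Shift_natCast ((leftSum_mono hSB).trans hr)
    ((rightSum_mono hSB).trans hs)]

theorem IsDimPoly.isNumerical2 {A : Set (Fin (m + n) → ℕ)} {ω : MvPolynomial (Fin 2) ℚ}
    (h : IsDimPoly m n A ω) : IsNumerical2 ω := by
  obtain ⟨r₀, s₀, h⟩ := h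
  refine ⟨r₀, s₀, fun r s hr hs => ?_⟩
  lift r to ℕ using (Int.natCast_nonneg r₀).trans hr
  lift s to ℕ using (Int.natCast_nonneg s₀).trans hs
  refine ⟨(VArs m n A r s).ncard, ?_⟩
  rw [Int.cast_natCast, Int.cast_natCast, h r s (by omega) (by omega), Int.cast_natCast]

end DimensionPolynomial

theorem dimension_polynomial_exists_general
    (m n : ℕ) (A : Set (Fin (m + n) → ℕ)) :
    ∃ ω : MvPolynomial (Fin 2) ℚ,
      IsNumerical2 ω ∧ IsDimPoly m n A ω ∧
      ω.totalDegree ≤ m + n ∧ ω.degreeOf 0 ≤ m ∧ ω.degreeOf 1 ≤ n := by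
  obtain ⟨B, hBA, hAB⟩ := exists_finset_subset_forall_exists_le A
  have hdim := isDimPoly_dimPoly hBA hAB
  exact ⟨dimPoly B, hdim.isNumerical2, hdim, totalDegree_dimPoly_le B,
    degreeOf_zero_dimPoly_le B, degreeOf_one_dimPoly_le B⟩

/-- For any `A ⊆ ℕ^{m+n}` there exists a numerical polynomial
`ω_A(t₁,t₂)` with `ω_A(r,s) = Card V_A(r,s)` for all large `r, s ∈ ℕ`, such
that `deg ω_A ≤ m+n`, `deg_{t₁} ω_A ≤ m` and `deg_{t₂} ω_A ≤ n`. -/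
theorem dimension_polynomial_exists
    (m n : ℕ) (hm : 0 < m) (hn : 0 < n) (A : Set (Fin (m + n) → ℕ)) :
    ∃ ω : MvPolynomial (Fin 2) ℚ,
      IsNumerical2 ω ∧ IsDimPoly m n A ω ∧
      ω.totalDegree ≤ m + n ∧ ω.degreeOf 0 ≤ m ∧ ω.degreeOf 1 ≤ n :=
  dimension_polynomial_exists_general m n A
end

section
/- Let A = {a₁,…,a_p} be a finite subset of ℕ^{m+n} with aᵢ = (a_{i1},…,a_{i,m+n}). For 0 ≤ l ≤ p let Γ(l,p) denote the set of all l-element subsets of {1,…,p}, and for σ ∈ Γ(l,p) let ā_{σj} = max{a_{ij} : i ∈ σ} for 1 ≤ j ≤ m+n, b_σ = Σ_{j=1}^{m} ā_{σj}, and c_σ = Σ_{j=m+1}^{m+n} ā_{σj}. Then the (m,n)-dimension polynomial of A satisfies ω_A(t₁,t₂) = Σ_{l=0}^{p} (−1)^l Σ_{σ∈Γ(l,p)} C(t₁+m−b_σ, m)·C(t₂+n−c_σ, n). -/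
open scoped BigOperators

/-! For `r, s` large, `Card V_A(r,s)` is computed by inclusion–exclusion over the conditions
`aᵢ ≤ v`. The points `v` with `v₁+⋯+vₘ ≤ r`, `v_{m+1}+⋯+v_{m+n} ≤ s` lying above every `aᵢ`,
`i ∈ σ`, are those above the componentwise maximum `ā_σ`; subtracting `ā_σ` identifies them
with a product of two simplices, with `C(r - b_σ + m, m)` and `C(s - c_σ + n, n)` points. These
are the values at `(r, s)` of `C(t₁+m−b_σ, m)·C(t₂+n−c_σ, n)`, and a polynomial in two variables
is determined by its values on a grid of large integers. -/

open Finset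

instance Pi.decidableLEOfFintype {ι α : Type*} [Fintype ι] [LE α] [DecidableLE α] :
    DecidableLE (ι → α) :=
  fun _ _ => Fintype.decidableForallFintype

def natSimplex (k R : ℕ) : Finset (Fin k → ℕ) :=
  {v ∈ Fintype.piFinset fun _ => range (R + 1) | ∑ i, v i ≤ R}

theorem mem_natSimplex {k R : ℕ} {v : Fin k → ℕ} : v ∈ natSimplex k R ↔ ∑ i, v i ≤ R := by
  refine mem_filter.trans ⟨And.right, fun h => ⟨Fintype.mem_piFinset.2 fun i => ?_, h⟩⟩
  exact mem_range.2 (Nat.lt_succ_of_le ((single_le_sum (fun _ _ => Nat.zero_le _)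
    (mem_univ i)).trans h))

theorem card_natSimplex (k R : ℕ) : #(natSimplex k R) = (R + k).choose k := by
  have hsum (f : Fin (k + 1) →₀ ℕ) : univ.sum f = f 0 + ∑ i : Fin k, f i.succ :=
    Fin.sum_univ_succ _
  -- stars and bars, with the slack `R - ∑ v` as an extra coordinate
  have h : #(natSimplex k R) = #((univ : Finset (Fin (k + 1))).finsuppAntidiag R) := by
    refine card_nbij' (fun v => Finsupp.equivFunOnFinite.symm (Fin.cons (R - ∑ i, v i) v))
      (fun f => Fin.tail f) (fun v hv => ?_) (fun f hf => ?_) (fun v _ => ?_) (fun f hf => ?_)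
    · rw [mem_coe, mem_natSimplex] at hv
      simp [mem_finsuppAntidiag, hv]
    · rw [mem_coe, mem_finsuppAntidiag, hsum] at hf
      simp only [mem_coe, mem_natSimplex, Fin.tail]
      omega
    · simp
    · rw [mem_coe, mem_finsuppAntidiag, hsum] at hf
      ext i
      refine Fin.cases ?_ (fun i => ?_) i <;> simp [Fin.tail]
      omega
  rw [h, card_finsuppAntidiag_nat_eq_choose, card_univ, Fintype.card_fin,
    show k + 1 + R - 1 = R + k by omega, Nat.choose_symm_add]

theorem card_filter_le_natSimplex {k R : ℕ} (b : Fin k → ℕ) (hb : ∑ i, b i ≤ R) :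
    #{v ∈ natSimplex k R | b ≤ v} = (R - ∑ i, b i + k).choose k := by
  rw [← card_natSimplex]
  refine card_nbij' (· - b) (· + b) (fun v hv => ?_) (fun w hw => ?_) (fun v hv => ?_)
    (fun w _ => add_tsub_cancel_right w b)
  · simp only [coe_filter, Set.mem_ofPred_eq, mem_natSimplex] at hv
    have : ∑ i, (v - b) i + ∑ i, b i = ∑ i, v i := by
      rw [← sum_add_distrib]; exact sum_congr rfl fun i _ => tsub_add_cancel_of_le (hv.2 i)
    simp only [mem_coe, mem_natSimplex]
    omega
  · simp only [mem_coe, mem_natSimplex] at hw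
    simp only [coe_filter, Set.mem_ofPred_eq, mem_natSimplex, Pi.add_apply, sum_add_distrib]
    exact ⟨by omega, le_add_self⟩
  · simp only [coe_filter, Set.mem_ofPred_eq] at hv
    exact tsub_add_cancel_of_le hv.2

def bidegreeBox (m n r s : ℕ) : Finset (Fin (m + n) → ℕ) :=
  (natSimplex m r ×ˢ natSimplex n s).map (Fin.appendEquiv m n).toEmbedding

theorem mem_bidegreeBox {m n r s : ℕ} {v : Fin (m + n) → ℕ} :
    v ∈ bidegreeBox m n r s ↔
      ∑ i, v (Fin.castAdd n i) ≤ r ∧ ∑ j, v (Fin.natAdd m j) ≤ s := by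
  simp [bidegreeBox, mem_natSimplex]

theorem Fin.le_append_iff {α : Type*} [LE α] {m n : ℕ} {b : Fin (m + n) → α} {u : Fin m → α}
    {w : Fin n → α} :
    b ≤ Fin.append u w ↔
      (fun i => b (Fin.castAdd n i)) ≤ u ∧ (fun j => b (Fin.natAdd m j)) ≤ w := by
  simp only [Pi.le_def, Fin.forall_fin_add, Fin.append_left, Fin.append_right]

theorem card_filter_le_bidegreeBox {m n r s : ℕ} (b : Fin (m + n) → ℕ)
    (hr : ∑ i, b (Fin.castAdd n i) ≤ r) (hs : ∑ j, b (Fin.natAdd m j) ≤ s) :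
    #{v ∈ bidegreeBox m n r s | b ≤ v} =
      (r - ∑ i, b (Fin.castAdd n i) + m).choose m *
        (s - ∑ j, b (Fin.natAdd m j) + n).choose n := by
  rw [bidegreeBox, filter_map, card_map, ← card_filter_le_natSimplex _ hr,
    ← card_filter_le_natSimplex _ hs, ← card_product, ← filter_product]
  exact congrArg card (filter_congr fun x _ => Fin.le_append_iff)

theorem card_filter_forall_not_eq_sum_powerset {α ι : Type*} [DecidableEq ι] (D : Finset α)
    (s : Finset ι) (P : ι → α → Prop) [∀ i, DecidablePred (P i)] :
    (#{x ∈ D | ∀ i ∈ s, ¬ P i x} : ℤ) =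
      ∑ t ∈ s.powerset, (-1) ^ #t * (#{x ∈ D | ∀ i ∈ t, P i x} : ℤ) := by
  simp only [card_filter, Nat.cast_sum, Nat.cast_ite, Nat.cast_one, Nat.cast_zero, mul_sum]
  rw [sum_comm]
  refine sum_congr rfl fun x _ => ?_
  -- `x` is counted with weight `∑_{t ⊆ S} (-1)^#t`, `S` being the set of conditions it meets
  set S : Finset ι := {i ∈ s | P i x}
  have hS : {t ∈ s.powerset | ∀ i ∈ t, P i x} = S.powerset := by
    ext t
    simp only [mem_filter, mem_powerset, S, subset_iff]
    exact ⟨fun h i hi => ⟨h.1 hi, h.2 i hi⟩, fun h => ⟨fun i hi => (h hi).1, fun i hi => (h hi).2⟩⟩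
  simp only [mul_ite, mul_one, mul_zero]
  rw [← sum_filter, hS, sum_powerset_neg_one_pow_card]
  simp [S, filter_eq_empty_iff]

theorem ncard_VArs_image {ι : Type*} {m n : ℕ} (a : ι → Fin (m + n) → ℕ) (t : Finset ι)
    (r s : ℕ) :
    (VArs m n (a '' t) r s).ncard = #{v ∈ bidegreeBox m n r s | ∀ i ∈ t, ¬ a i ≤ v} := by
  rw [← Set.ncard_coe_finset]
  congr 1
  ext v
  simp [VArs, VA, mem_bidegreeBox, and_comm]

theorem eval_binomShift {k c R : ℕ} (h : c ≤ R) :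
    (binomShift k c).eval (R : ℚ) = (R - c + k).choose k := by
  obtain ⟨R, rfl⟩ := Nat.exists_eq_add_of_le h
  have hprod : ∏ j ∈ range k, ((c + R : ℕ) + ((j : ℚ) + 1 - (c : ℤ))) =
      ((R + 1).ascFactorial k : ℕ) := by
    rw [Nat.ascFactorial_eq_prod_range]
    push_cast
    exact prod_congr rfl fun j _ => by ring
  rw [binomShift, Polynomial.eval_smul, Polynomial.eval_prod]
  simp only [Polynomial.eval_add, Polynomial.eval_X, Polynomial.eval_C]
  rw [hprod, Nat.ascFactorial_eq_factorial_mul_choose, Nat.add_sub_cancel_left, smul_eq_mul]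
  push_cast
  field_simp

theorem MvPolynomial.eval_aeval_X {σ R : Type*} [CommRing R] (x : σ → R) (i : σ)
    (q : Polynomial R) : eval x (Polynomial.aeval (X i) q) = q.eval (x i) := by
  change aeval x (Polynomial.aeval _ q) = _
  rw [← Polynomial.aeval_algHom_apply]
  simp

theorem eval_binom2Shift {m n r s b c : ℕ} (hb : b ≤ r) (hc : c ≤ s) :
    MvPolynomial.eval ![(r : ℚ), (s : ℚ)] (binom2Shift m b n c) =
      (r - b + m).choose m * (s - c + n).choose n := by
  simp [binom2Shift, MvPolynomial.eval_aeval_X, eval_binomShift hb, eval_binomShift hc]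

theorem MvPolynomial.eq_of_eval_natCast_eq {f g : MvPolynomial (Fin 2) ℚ} (N : ℕ)
    (h : ∀ r s : ℕ, N ≤ r → N ≤ s →
      eval ![(r : ℚ), (s : ℚ)] f = eval ![(r : ℚ), (s : ℚ)] g) :
    f = g := by
  refine funext_set (fun _ => Nat.cast '' Set.Ici N)
    (fun _ => (Set.Ici_infinite N).image Nat.cast_injective.injOn) fun x hx => ?_
  obtain ⟨r, hr, hxr⟩ := hx 0 trivial
  obtain ⟨s, hs, hxs⟩ := hx 1 trivial
  obtain rfl : x = ![(r : ℚ), (s : ℚ)] := by ext i; fin_cases i <;> simp [hxr, hxs]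
  exact h r s hr hs

theorem eval_binom2Shift_sup {ι : Type*} {m n r s : ℕ} (a : ι → Fin (m + n) → ℕ)
    (σ : Finset ι)
    (hr : ∑ j, σ.sup a (Fin.castAdd n j) ≤ r) (hs : ∑ j, σ.sup a (Fin.natAdd m j) ≤ s) :
    MvPolynomial.eval ![(r : ℚ), (s : ℚ)]
        (binom2Shift m (∑ j : Fin m, (σ.sup fun i => a i (Fin.castAdd n j) : ℕ) : ℤ)
          n (∑ j : Fin n, (σ.sup fun i => a i (Fin.natAdd m j) : ℕ) : ℤ)) =
      #{v ∈ bidegreeBox m n r s | ∀ i ∈ σ, a i ≤ v} := by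
  simp only [← Finset.sup_apply, ← Nat.cast_sum]
  rw [eval_binom2Shift hr hs, ← Nat.cast_mul, ← card_filter_le_bidegreeBox _ hr hs]
  simp [Finset.sup_le_iff]

theorem dimension_polynomial_formula_general
    (m n : ℕ) (p : ℕ) (a : Fin p → Fin (m + n) → ℕ)
    (ω : MvPolynomial (Fin 2) ℚ)
    (hω : IsDimPoly m n (Set.range a) ω) :
    ω = ∑ l ∈ Finset.range (p + 1), ((-1 : ℚ)) ^ l •
      ∑ σ ∈ Finset.univ.powersetCard l,
        binom2Shift m (∑ j : Fin m, (σ.sup fun i => a i (Fin.castAdd n j) : ℕ) : ℤ)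
          n (∑ j : Fin n, (σ.sup fun i => a i (Fin.natAdd m j) : ℕ) : ℤ) := by
  obtain ⟨r₀, s₀, hω⟩ := hω
  have hsup (σ : Finset (Fin p)) (j) : σ.sup a j ≤ univ.sup a j :=
    sup_mono (f := a) (subset_univ σ) j
  set N := max (max r₀ s₀) (∑ j, univ.sup a j)
  refine MvPolynomial.eq_of_eval_natCast_eq N fun r s hr hs => ?_
  have hbound (σ : Finset (Fin p)) :
      ∑ j, σ.sup a (Fin.castAdd n j) ≤ r ∧ ∑ j, σ.sup a (Fin.natAdd m j) ≤ s := by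
    have := Fin.sum_univ_add (univ.sup a)
    have := sum_le_sum fun j (_ : j ∈ univ) => hsup σ (Fin.castAdd n j)
    have := sum_le_sum fun j (_ : j ∈ univ) => hsup σ (Fin.natAdd m j)
    omega
  have hIE := card_filter_forall_not_eq_sum_powerset (bidegreeBox m n r s) univ
    fun i v => a i ≤ v
  rw [sum_powerset, card_univ, Fintype.card_fin] at hIE
  rw [hω r s (by omega) (by omega), ← Set.image_univ, ← coe_univ, ncard_VArs_image,
    ← Int.cast_natCast, hIE]
  push_cast
  simp only [map_sum, MvPolynomial.smul_eval, mul_sum]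
  refine sum_congr rfl fun l _ => sum_congr rfl fun σ hσ => ?_
  rw [(mem_powersetCard.1 hσ).2, eval_binom2Shift_sup a σ (hbound σ).1 (hbound σ).2]

/-- Explicit inclusion–exclusion formula for the
`(m,n)`-dimension polynomial of a finite set `A = {a₁,…,a_p} ⊆ ℕ^{m+n}`:
`ω_A(t₁,t₂) = Σ_{l=0}^{p} (−1)^l Σ_{σ∈Γ(l,p)} C(t₁+m−b_σ, m)·C(t₂+n−c_σ, n)`,
where for `σ ⊆ {1,…,p}` we set `ā_{σj} = max_{i∈σ} a_{ij}`,
`b_σ = Σ_{j=1}^{m} ā_{σj}` and `c_σ = Σ_{j=m+1}^{m+n} ā_{σj}`. -/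
theorem dimension_polynomial_formula
    (m n : ℕ) (hm : 0 < m) (hn : 0 < n) (p : ℕ) (a : Fin p → Fin (m + n) → ℕ)
    (ω : MvPolynomial (Fin 2) ℚ) (hnum : IsNumerical2 ω)
    (hω : IsDimPoly m n (Set.range a) ω) :
    ω = ∑ l ∈ Finset.range (p + 1), ((-1 : ℚ)) ^ l •
      ∑ σ ∈ Finset.univ.powersetCard l,
        binom2Shift m (∑ j : Fin m, (σ.sup fun i => a i (Fin.castAdd n j) : ℕ) : ℤ)
          n (∑ j : Fin n, (σ.sup fun i => a i (Fin.natAdd m j) : ℕ) : ℤ) :=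
  dimension_polynomial_formula_general m n p a ω hω
end

section
/- Let G = {g₁,…,g_r} be an (x,∂)-Gröbner basis of an Aₙ(K)-submodule N of a free Aₙ(K)-module E with basis e₁,…,e_m. If f ∈ N and f is (x,∂)-reduced with respect to G, then f = 0. -/
open scoped BigOperators

set_option maxHeartbeats 1000000
set_option synthInstance.maxHeartbeats 400000

/-- The index of a monomial `x^α ∂^β` of the Weyl algebra: the pair `(α, β)`. -/
abbrev WMon (n : ℕ) := (Fin n → ℕ) × (Fin n → ℕ)

/-- `ord_x (x^α ∂^β) = |α|`. -/
def ordX {n : ℕ} (θ : WMon n) : ℕ := ∑ i, θ.1 i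

/-- `ord_∂ (x^α ∂^β) = |β|`. -/
def ordD {n : ℕ} (θ : WMon n) : ℕ := ∑ i, θ.2 i

/-- Lexicographic comparison of exponent vectors. -/
def lexLt {n : ℕ} (f g : Fin n → ℕ) : Prop :=
  ∃ i, (∀ j, j < i → f j = g j) ∧ f i < g i

/-- The order `<_x` on monomials: lexicographic comparison of
`(ord_x θ, ord_∂ θ, α₁,…,αₙ, β₁,…,βₙ)`. -/
def monLtX {n : ℕ} (θ θ' : WMon n) : Prop :=
  ordX θ < ordX θ' ∨ (ordX θ = ordX θ' ∧ (ordD θ < ordD θ' ∨ (ordD θ = ordD θ' ∧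
    (lexLt θ.1 θ'.1 ∨ (θ.1 = θ'.1 ∧ lexLt θ.2 θ'.2)))))

/-- The order `<_∂` on monomials: lexicographic comparison of
`(ord_∂ θ, ord_x θ, β₁,…,βₙ, α₁,…,αₙ)`. -/
def monLtD {n : ℕ} (θ θ' : WMon n) : Prop :=
  ordD θ < ordD θ' ∨ (ordD θ = ordD θ' ∧ (ordX θ < ordX θ' ∨ (ordX θ = ordX θ' ∧
    (lexLt θ.2 θ'.2 ∨ (θ.2 = θ'.2 ∧ lexLt θ.1 θ'.1)))))

/-- Divisibility of monomials: componentwise comparison of exponents. -/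
def monDvd {n : ℕ} (θ θ' : WMon n) : Prop := θ.1 ≤ θ'.1 ∧ θ.2 ≤ θ'.2

/-- The quotient `θ'/θ` of monomials (componentwise truncated subtraction). -/
def monQuot {n : ℕ} (θ' θ : WMon n) : WMon n := (θ'.1 - θ.1, θ'.2 - θ.2)

/-- The (commutative) product of monomial indices. -/
def monMul {n : ℕ} (θ θ' : WMon n) : WMon n := (θ.1 + θ'.1, θ.2 + θ'.2)

/-- The least common multiple of two monomials. -/
def monLcm {n : ℕ} (θ θ' : WMon n) : WMon n := (θ.1 ⊔ θ'.1, θ.2 ⊔ θ'.2)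

/-- The index of a term `θ eⱼ` of a free module with basis `e₁,…,e_m`. -/
abbrev WTerm (n m : ℕ) := WMon n × Fin m

/-- The order `<_x` on terms. -/
def termLtX {n m : ℕ} (t t' : WTerm n m) : Prop :=
  monLtX t.1 t'.1 ∨ (t.1 = t'.1 ∧ t.2 < t'.2)

/-- The order `<_∂` on terms. -/
def termLtD {n m : ℕ} (t t' : WTerm n m) : Prop :=
  monLtD t.1 t'.1 ∨ (t.1 = t'.1 ∧ t.2 < t'.2)

/-- `t` divides `t'` as terms: same basis vector, dividing monomial. -/
def termDvd {n m : ℕ} (t t' : WTerm n m) : Prop := t.2 = t'.2 ∧ monDvd t.1 t'.1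

/-- Multiplication of a term by a monomial (on the level of indices). -/
def termMulMon {n m : ℕ} (θ : WMon n) (t : WTerm n m) : WTerm n m := (monMul θ t.1, t.2)

/-- The monomial quotient `t'/t` of two terms. -/
def termQuot {n m : ℕ} (t' t : WTerm n m) : WMon n := monQuot t'.1 t.1

/-- The monomial `x^α ∂^β` of the Weyl algebra indexed by `θ = (α, β)`. -/
noncomputable def wMonOf (K : Type*) [CommRing K] (n : ℕ) (θ : WMon n) :
    WeylAlgebra K n := wMon K n θ.1 θ.2

section Groebner

variable {K : Type*} [Field K] [CharZero K] {n m : ℕ}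
variable {E : Type*} [AddCommGroup E] [Module (WeylAlgebra K n) E]
  [Module K E] [IsScalarTower K (WeylAlgebra K n) E]

/-- `t` is the `x`-leader `u_f` of `f`: `t` appears in `f` and every other
term appearing in `f` is smaller with respect to `<_x`. -/
def IsXLeader (B : Module.Basis (WTerm n m) K E) (f : E) (t : WTerm n m) : Prop :=
  B.repr f t ≠ 0 ∧ ∀ t', B.repr f t' ≠ 0 → t' = t ∨ termLtX t' t

/-- `t` is the `∂`-leader `v_f` of `f`. -/
def IsDLeader (B : Module.Basis (WTerm n m) K E) (f : E) (t : WTerm n m) : Prop :=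
  B.repr f t ≠ 0 ∧ ∀ t', B.repr f t' ≠ 0 → t' = t ∨ termLtD t' t

/-- `f` is `(x,∂)`-reduced with respect to `g`: `f` contains no multiple
`θ u_g` of `u_g` with `ord_∂(θ v_g) ≤ ord_∂ v_f`. -/
def IsXDReducedWrt (B : Module.Basis (WTerm n m) K E) (f g : E) : Prop :=
  ∀ w u v vf, B.repr f w ≠ 0 → IsXLeader B g u → IsDLeader B g v →
    IsDLeader B f vf → termDvd u w →
    ¬ (ordD (termQuot w u) + ordD v.1 ≤ ordD vf.1)

/-- `G` is an `(x,∂)`-Gröbner basis of the submodule `N`: the `G i` are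
nonzero elements of `N` and for every nonzero `f ∈ N` there is `i` with
`ρ(G i) ∣ ρ(f)`, i.e. `u_{G i} ∣ u_f` and `d(G i) ≤ d(f)` where
`d(h) = ord_∂ v_h − ord_∂ u_h`. -/
def IsXDGroebnerBasis (B : Module.Basis (WTerm n m) K E) {r : ℕ} (G : Fin r → E)
    (N : Submodule (WeylAlgebra K n) E) : Prop :=
  (∀ i, G i ≠ 0) ∧ (∀ i, G i ∈ N) ∧
  ∀ f ∈ N, f ≠ 0 → ∃ (i : Fin r) (uf vf ui vi : WTerm n m),
    IsXLeader B f uf ∧ IsDLeader B f vf ∧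
    IsXLeader B (G i) ui ∧ IsDLeader B (G i) vi ∧
    termDvd ui uf ∧
    (ordD vi.1 : ℤ) - (ordD ui.1 : ℤ) ≤ (ordD vf.1 : ℤ) - (ordD uf.1 : ℤ)

/-- One step of `(x,∂)`-reduction of `f` modulo `g`, producing `h`. -/
def XDReducesOneStep (B : Module.Basis (WTerm n m) K E) (g f h : E) : Prop :=
  ∃ (w u v vf : WTerm n m),
    B.repr f w ≠ 0 ∧ IsXLeader B g u ∧ IsDLeader B g v ∧ IsDLeader B f vf ∧
    termDvd u w ∧ ordD (termQuot w u) + ordD v.1 ≤ ordD vf.1 ∧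
    h = f - (B.repr f w * (B.repr g u)⁻¹) • (wMonOf K n (termQuot w u) • g)

/-- `f` `(x,∂)`-reduces to `h` modulo the finite family `G`. -/
def XDReducesTo (B : Module.Basis (WTerm n m) K E) {r : ℕ} (G : Fin r → E) (f h : E) : Prop :=
  Relation.ReflTransGen (fun f' h' => ∃ i, XDReducesOneStep B (G i) f' h') f h

/-- `S` is the `x`-`S`-polynomial `S_x(f, g)`. -/
def IsSPolyX (B : Module.Basis (WTerm n m) K E) (f g S : E) : Prop :=
  ∃ uf ug : WTerm n m, IsXLeader B f uf ∧ IsXLeader B g ug ∧ uf.2 = ug.2 ∧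
    S = (B.repr f uf)⁻¹ • (wMonOf K n (monQuot (monLcm uf.1 ug.1) uf.1) • f) -
        (B.repr g ug)⁻¹ • (wMonOf K n (monQuot (monLcm uf.1 ug.1) ug.1) • g)

/-- `G` is a Gröbner basis of `N` with respect to the term order `<_∂`
(the usual notion): the `G i` are nonzero elements of `N`, and the `∂`-leader
of every nonzero `f ∈ N` is a multiple of some `v_{G i}`. -/
def IsDGroebnerBasis (B : Module.Basis (WTerm n m) K E) {r : ℕ} (G : Fin r → E)
    (N : Submodule (WeylAlgebra K n) E) : Prop :=
  (∀ i, G i ≠ 0) ∧ (∀ i, G i ∈ N) ∧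
  ∀ f ∈ N, f ≠ 0 → ∃ (i : Fin r) (vf vi : WTerm n m),
    IsDLeader B f vf ∧ IsDLeader B (G i) vi ∧ termDvd vi vf

end Groebner

lemma ordD_monQuot_add {n : ℕ} {θ θ' : WMon n} (h : θ.2 ≤ θ'.2) :
    ordD (monQuot θ' θ) + ordD θ = ordD θ' := by
  simp only [ordD, monQuot, ← Finset.sum_add_distrib, Pi.sub_apply]
  exact Finset.sum_congr rfl fun i _ => tsub_add_cancel_of_le (h i)

/-- The leading term `u_f` itself is the multiple of `u_g` that `ρ(g) ∣ ρ(f)` forbids in a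
reduced `f`: with `u_f = θ u_g`, `ord_∂(θ v_g) = ord_∂ u_f + d(g) ≤ ord_∂ u_f + d(f) = ord_∂ v_f`. -/
lemma not_isXDReducedWrt_of_rho_dvd {K : Type*} [Field K] {n m : ℕ}
    {E : Type*} [AddCommGroup E] [Module K E] {B : Module.Basis (WTerm n m) K E} {f g : E}
    {uf vf ug vg : WTerm n m} (huf : IsXLeader B f uf) (hvf : IsDLeader B f vf)
    (hug : IsXLeader B g ug) (hvg : IsDLeader B g vg) (hdvd : termDvd ug uf)
    (hd : (ordD vg.1 : ℤ) - ordD ug.1 ≤ (ordD vf.1 : ℤ) - ordD uf.1) :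
    ¬ IsXDReducedWrt B f g := fun hred => by
  refine hred uf ug vg vf huf.1 hug hvg hvf hdvd ?_
  have hquot := ordD_monQuot_add hdvd.2.2
  unfold termQuot
  omega

theorem xd_reduced_mem_eq_zero_general
    (K : Type*) [Field K] (n m : ℕ)
    (E : Type*) [AddCommGroup E] [Module (WeylAlgebra K n) E]
    [Module K E]
    (B : Module.Basis (WTerm n m) K E)
    (N : Submodule (WeylAlgebra K n) E)
    (r : ℕ) (G : Fin r → E) (hG : IsXDGroebnerBasis B G N)
    (f : E) (hf : f ∈ N) (hred : ∀ i, IsXDReducedWrt B f (G i)) :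
    f = 0 := by
  by_contra hne
  obtain ⟨i, uf, vf, ui, vi, huf, hvf, hui, hvi, hdvd, hd⟩ := hG.2.2 f hf hne
  exact not_isXDReducedWrt_of_rho_dvd huf hvf hui hvi hdvd hd (hred i)

/-- (Theorem 4.8(ii).) If `G` is an `(x,∂)`-Gröbner basis of
a submodule `N` of a free `Aₙ(K)`-module `E`, `f ∈ N`, and `f` is
`(x,∂)`-reduced with respect to `G`, then `f = 0`. -/
theorem xd_reduced_mem_eq_zero
    (K : Type*) [Field K] [CharZero K] (n m : ℕ) (hn : 1 ≤ n) (hm : 1 ≤ m)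
    (E : Type*) [AddCommGroup E] [Module (WeylAlgebra K n) E]
    [Module K E] [IsScalarTower K (WeylAlgebra K n) E]
    (B : Module.Basis (WTerm n m) K E)
    (hB : ∀ (θ : WMon n) (j : Fin m), B (θ, j) = wMonOf K n θ • B ((0 : WMon n), j))
    (N : Submodule (WeylAlgebra K n) E)
    (r : ℕ) (G : Fin r → E) (hG : IsXDGroebnerBasis B G N)
    (f : E) (hf : f ∈ N) (hred : ∀ i, IsXDReducedWrt B f (G i)) :
    f = 0 :=
  xd_reduced_mem_eq_zero_general K n m E B N r G hG f hf hred
end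

section
/- Let M be a finitely generated Aₙ(K)-module with generators f₁,…,f_m, let E be a free Aₙ(K)-module with basis e₁,…,e_m, π : E → M the Aₙ(K)-epimorphism with π(eᵢ) = fᵢ, N = Ker π, and G = {g₁,…,g_d} an (x,∂)-Gröbner basis of N. For r, s ∈ ℕ let M_{rs} = Σᵢ₌₁^m W_{rs}fᵢ, and let U_{rs} be the set of terms w ∈ Θe with ord_x w ≤ r, ord_∂ w ≤ s, such that either w is not a multiple of any u_{gᵢ} (1 ≤ i ≤ d), or for every θ ∈ Θ and gⱼ ∈ G with w = θu_{gⱼ} one has ord_∂(θv_{gⱼ}) > s. Then π(U_{rs}) is a basis of the K-vector space M_{rs}. -/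
open scoped BigOperators

set_option maxHeartbeats 1000000
set_option synthInstance.maxHeartbeats 400000

/-!
Acting by a monomial on a term only lowers the orders in its correction terms: `θ • (θ' eⱼ)` is
`(θθ') eⱼ` plus terms of strictly smaller `x`- and `∂`-order, since moving `∂ᵢ` past `x^α`
produces `αᵢ x^(α - eᵢ)`.

Spanning: a term `w` of the box `ord_x ≤ r, ord_∂ ≤ s` outside `U_{rs}` is `θ u_g` with
`ord_∂ θ + ord_∂ v_g ≤ s`. Then `θ g ∈ N` has `<_x`-leading term a nonzero multiple of `w`, and all
its other terms are `<_x`-smaller and stay in the box, so applying `π` writes `π w` through smaller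
terms of the box; `<_x` is well founded.

Independence: a nonzero `f ∈ N` supported on `U_{rs}` has some `g ∈ G` with `u_g ∣ u_f` and
`d(g) ≤ d(f)`, i.e. `ord_∂ (θ v_g) ≤ ord_∂ v_f ≤ s` for `θ = u_f / u_g`, contradicting
`u_f ∈ U_{rs}`.
-/

lemma Pi.induction_on_single_one_add {ι : Type*} [Finite ι] [DecidableEq ι]
    {p : (ι → ℕ) → Prop} (zero : p 0) (step : ∀ i b, p b → p (Pi.single i 1 + b))
    (b : ι → ℕ) : p b := by
  have key : ∀ f b, p b → p (f + b) := fun f =>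
    Pi.single_induction (fun f => ∀ b, p b → p (f + b)) f (by simp)
      (fun f g hf hg b hb => by rw [add_assoc]; exact hf _ (hg b hb))
      fun i k => by
        induction k with
        | zero => simp
        | succ k ih =>
          intro b hb
          rw [add_comm k 1, Pi.single_add, add_assoc]
          exact step _ _ (ih b hb)
  simpa using key b 0 zero

section TermOrder

variable {n m : ℕ}

def termKeyX (t : WTerm n m) : ℕ ×ₗ ℕ ×ₗ Lex (Fin n → ℕ) ×ₗ Lex (Fin n → ℕ) ×ₗ Fin m :=
  toLex (ordX t.1, toLex (ordD t.1, toLex (toLex t.1.1, toLex (toLex t.1.2, t.2))))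

lemma termKeyX_lt_of_termLtX {t t' : WTerm n m} (h : termLtX t t') :
    termKeyX t < termKeyX t' := by
  simp only [termKeyX, Prod.Lex.toLex_lt_toLex]
  rcases h with ((h | ⟨h1, h | ⟨h2, h | ⟨h3, h⟩⟩⟩) | ⟨h1, h2⟩)
  · exact Or.inl h
  · exact Or.inr ⟨h1, Or.inl h⟩
  · exact Or.inr ⟨h1, Or.inr ⟨h2, Or.inl h⟩⟩
  · exact Or.inr ⟨h1, Or.inr ⟨h2, Or.inr ⟨congrArg toLex h3, Or.inl h⟩⟩⟩
  · simp [h1, h2]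

lemma wellFounded_termLtX : WellFounded (termLtX : WTerm n m → WTerm n m → Prop) :=
  Subrelation.wf termKeyX_lt_of_termLtX (InvImage.wf termKeyX wellFounded_lt)

lemma ordX_le_of_termLtX {t t' : WTerm n m} (h : termLtX t t') : ordX t.1 ≤ ordX t'.1 := by
  rcases h with ((h | ⟨h, -⟩) | ⟨h, -⟩)
  · exact h.le
  · exact h.le
  · rw [h]

lemma ordD_le_of_termLtD {t t' : WTerm n m} (h : termLtD t t') : ordD t.1 ≤ ordD t'.1 := by
  rcases h with ((h | ⟨h, -⟩) | ⟨h, -⟩)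
  · exact h.le
  · exact h.le
  · rw [h]

lemma ordX_monMul (θ θ' : WMon n) : ordX (monMul θ θ') = ordX θ + ordX θ' :=
  Finset.sum_add_distrib

lemma ordD_monMul (θ θ' : WMon n) : ordD (monMul θ θ') = ordD θ + ordD θ' :=
  Finset.sum_add_distrib

lemma ordD_single_add (α β : Fin n → ℕ) (i : Fin n) :
    ordD (α, Pi.single i 1 + β) = ordD (α, β) + 1 := by
  simp only [ordD, Pi.add_apply, Finset.sum_add_distrib, Finset.sum_pi_single',
    Finset.mem_univ, if_true]
  omega

lemma ordX_sub_single_le (α β : Fin n → ℕ) (i : Fin n) :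
    ordX (α - Pi.single i 1, β) ≤ ordX (α, β) :=
  Finset.sum_le_sum fun _ _ => Nat.sub_le _ _

lemma ordX_sub_single_lt {α : Fin n → ℕ} (β : Fin n → ℕ) {i : Fin n} (h : α i ≠ 0) :
    ordX (α - Pi.single i 1, β) < ordX (α, β) :=
  Finset.sum_lt_sum (fun _ _ => Nat.sub_le _ _) ⟨i, Finset.mem_univ _, by simp; omega⟩

lemma lexLt_add_left {f g : Fin n → ℕ} (a : Fin n → ℕ) (h : lexLt f g) : lexLt (a + f) (a + g) := by
  obtain ⟨i, heq, hlt⟩ := h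
  exact ⟨i, fun j hj => by simp [heq j hj], by simpa using hlt⟩

lemma monLtX_monMul_left (θ : WMon n) {a b : WMon n} (h : monLtX a b) :
    monLtX (monMul θ a) (monMul θ b) := by
  unfold monLtX at h ⊢
  rw [ordX_monMul, ordX_monMul, ordD_monMul, ordD_monMul]
  rcases h with (h | ⟨h1, h | ⟨h2, h | ⟨h3, h⟩⟩⟩)
  · omega
  · omega
  · exact Or.inr ⟨by omega, Or.inr ⟨by omega, Or.inl (lexLt_add_left _ h)⟩⟩
  · exact Or.inr ⟨by omega, Or.inr ⟨by omega, Or.inr ⟨congrArg (θ.1 + ·) h3, lexLt_add_left _ h⟩⟩⟩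

lemma termLtX_termMulMon (θ : WMon n) {t t' : WTerm n m} (h : termLtX t t') :
    termLtX (termMulMon θ t) (termMulMon θ t') := by
  rcases h with h | ⟨h1, h2⟩
  · exact Or.inl (monLtX_monMul_left θ h)
  · exact Or.inr ⟨by rw [termMulMon, termMulMon, h1], h2⟩

lemma termMulMon_termQuot {u w : WTerm n m} (h : termDvd u w) :
    termMulMon (termQuot w u) u = w := by
  obtain ⟨h2, hα, hβ⟩ := h
  exact Prod.ext (Prod.ext (tsub_add_cancel_of_le hα) (tsub_add_cancel_of_le hβ)) h2

end TermOrder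

section CommutingProducts

open scoped Function

variable {A : Type*} [Monoid A] {n : ℕ}

lemma List.prod_ofFn_eq_noncommProd_s15 (f : Fin n → A) (hf : _root_.Pairwise (Commute on f)) :
    (List.ofFn f).prod = Finset.univ.noncommProd f (hf.set_pairwise _) := by
  unfold Finset.noncommProd
  simp only [Fin.univ_val_map, Multiset.noncommProd_coe]

variable {g : Fin n → A} (hg : ∀ i j, Commute (g i) (g j))
include hg

lemma pairwise_commute_pow (c : Fin n → ℕ) : _root_.Pairwise (Commute on fun i => g i ^ c i) :=
  fun i j _ => (hg i j).pow_pow _ _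

lemma List.prod_ofFn_pow_add_s15 (a b : Fin n → ℕ) :
    (List.ofFn fun i => g i ^ (a i + b i)).prod
      = (List.ofFn fun i => g i ^ a i).prod * (List.ofFn fun i => g i ^ b i).prod := by
  simp only [pow_add]
  rw [List.prod_ofFn_eq_noncommProd_s15 _ (pairwise_commute_pow hg a),
    List.prod_ofFn_eq_noncommProd_s15 _ (pairwise_commute_pow hg b),
    ← Finset.noncommProd_mul_distrib _ _ _ _ fun i _ j _ _ => (hg i j).pow_pow _ _]
  refine List.prod_ofFn_eq_noncommProd_s15 _ fun i j _ => ?_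
  apply Commute.mul_left <;> apply Commute.mul_right <;> exact (hg i j).pow_pow _ _

lemma List.prod_ofFn_pow_single_s15 (i : Fin n) :
    (List.ofFn fun k => g k ^ (Pi.single i 1 : Fin n → ℕ) k).prod = g i := by
  set f := fun k => g k ^ (Pi.single i 1 : Fin n → ℕ) k
  have hf := (pairwise_commute_pow hg (Pi.single i 1)).set_pairwise
    (Finset.univ : Finset (Fin n))
  have hsplit := Finset.mul_noncommProd_erase Finset.univ (Finset.mem_univ i) f hf
  have hrest := Finset.noncommProd_eq_pow_card (Finset.univ.erase i) f (hf.mono (by simp)) 1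
    fun k hk => by simp [f, Pi.single_eq_of_ne (Finset.ne_of_mem_erase hk)]
  rw [List.prod_ofFn_eq_noncommProd_s15 _ (pairwise_commute_pow hg _), ← hsplit, hrest]
  simp [f]

end CommutingProducts

section WeylMonomials

open MvPolynomial

variable (K : Type*) [CommRing K] (n : ℕ)

noncomputable def xMon (α : Fin n → ℕ) : MvPolynomial (Fin n) K :=
  monomial (Finsupp.equivFunOnFinite.symm α) 1

lemma list_prod_mulX_pow (α : Fin n → ℕ) :
    (List.ofFn fun i => mulX K n i ^ α i).prod = LinearMap.mulLeft K (xMon K n α) := by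
  have hX : (List.ofFn fun i => mulX K n i ^ α i)
      = (List.ofFn fun i => X i ^ α i).map (Algebra.lmul K _) := by
    simp only [List.map_ofFn, Function.comp_def, mulX, map_pow]
    rfl
  rw [hX, ← map_list_prod, List.prod_ofFn, prod_X_pow]
  show LinearMap.mulLeft K _ = LinearMap.mulLeft K _
  unfold xMon
  congr 3
  exact Finsupp.ext fun i => by simp

lemma xMon_add (a b : Fin n → ℕ) : xMon K n (a + b) = xMon K n a * xMon K n b := by
  unfold xMon
  rw [monomial_mul, one_mul]
  congr 2
  exact Finsupp.ext fun i => by simp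

lemma xMon_zero : xMon K n 0 = 1 := by
  unfold xMon
  rw [← C_1, C_apply]
  congr 2
  exact Finsupp.ext fun i => rfl

lemma pderiv_xMon (i : Fin n) (α : Fin n → ℕ) :
    pderiv i (xMon K n α) = (α i : K) • xMon K n (α - Pi.single i 1) := by
  rw [xMon, xMon, pderiv_monomial, smul_monomial, one_mul, smul_eq_mul, mul_one]
  congr 2
  exact Finsupp.ext fun k => by simp [Finsupp.single_apply, Pi.single_apply, eq_comm]

lemma pdOp_mul_mulLeft (i : Fin n) (p : MvPolynomial (Fin n) K) :
    pdOp K n i * LinearMap.mulLeft K p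
      = LinearMap.mulLeft K p * pdOp K n i + LinearMap.mulLeft K (pderiv i p) := by
  refine LinearMap.ext fun q => ?_
  simp [pdOp, mul_comm]

noncomputable def dPow (β : Fin n → ℕ) : Module.End K (MvPolynomial (Fin n) K) :=
  (List.ofFn fun i => pdOp K n i ^ β i).prod

lemma dPow_add (a b : Fin n → ℕ) : dPow K n (a + b) = dPow K n a * dPow K n b :=
  List.prod_ofFn_pow_add_s15 (pdOp_commute K n) a b

lemma dPow_single (i : Fin n) : dPow K n (Pi.single i 1) = pdOp K n i :=
  List.prod_ofFn_pow_single_s15 (pdOp_commute K n) i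

lemma dPow_zero : dPow K n 0 = 1 := by
  simp [dPow]

lemma coe_wMon (α β : Fin n → ℕ) :
    (wMon K n α β : Module.End K (MvPolynomial (Fin n) K))
      = LinearMap.mulLeft K (xMon K n α) * dPow K n β := by
  show wMonEnd K n α β = _
  rw [wMonEnd, list_prod_mulX_pow, dPow]

lemma wMon_zero_zero : wMon K n 0 0 = 1 :=
  Subtype.ext <| by
    rw [coe_wMon, Subalgebra.coe_one, xMon_zero, dPow_zero, LinearMap.mulLeft_one]; rfl

lemma wMon_x_mul (a α β : Fin n → ℕ) : wMon K n a 0 * wMon K n α β = wMon K n (a + α) β :=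
  Subtype.ext <| by
    simp only [Subalgebra.coe_mul, coe_wMon, xMon_add, dPow_zero, mul_one, LinearMap.mulLeft_mul]
    rfl

lemma wMonOf_eq_mul (θ : WMon n) : wMonOf K n θ = wMon K n θ.1 0 * wMon K n 0 θ.2 := by
  rw [wMon_x_mul, add_zero, wMonOf]

lemma wMon_d_add (b b' : Fin n → ℕ) : wMon K n 0 (b + b') = wMon K n 0 b * wMon K n 0 b' :=
  Subtype.ext <| by
    simp only [Subalgebra.coe_mul, coe_wMon, xMon_zero, dPow_add, LinearMap.mulLeft_one]
    rfl

lemma wMon_dSingle_mul (i : Fin n) (α β : Fin n → ℕ) :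
    wMon K n 0 (Pi.single i 1) * wMon K n α β
      = wMon K n α (Pi.single i 1 + β) + (α i : K) • wMon K n (α - Pi.single i 1) β :=
  Subtype.ext <| by
    have hsmul : LinearMap.mulLeft K (pderiv i (xMon K n α))
        = (α i : K) • LinearMap.mulLeft K (xMon K n (α - Pi.single i 1)) :=
      LinearMap.ext fun q => by
        rw [LinearMap.mulLeft_apply, pderiv_xMon, LinearMap.smul_apply, LinearMap.mulLeft_apply,
          smul_mul_assoc]
    simp only [Subalgebra.coe_mul, Subalgebra.coe_add, Subalgebra.coe_smul, coe_wMon,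
      xMon_zero, dPow_add, dPow_single, LinearMap.mulLeft_one, Module.End.one_eq_id.symm, one_mul]
    rw [← mul_assoc, pdOp_mul_mulLeft, add_mul, mul_assoc, hsmul, smul_mul_assoc]

end WeylMonomials

section FreeModule

variable {K : Type*} [CommRing K] {n m : ℕ} {E : Type*} [AddCommGroup E] [Module K E]
  (B : Module.Basis (WTerm n m) K E)

def lowerSpan (a b : ℕ) : Submodule K E :=
  Submodule.span K (B '' {t | ordX t.1 < a ∧ ordD t.1 < b})

lemma basis_mem_lowerSpan {t : WTerm n m} {a b : ℕ} (ha : ordX t.1 < a) (hb : ordD t.1 < b) :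
    B t ∈ lowerSpan B a b :=
  Submodule.subset_span ⟨t, ⟨ha, hb⟩, rfl⟩

variable [Module (WeylAlgebra K n) E]

lemma smul_mem_span_of_forall_smul_mem [IsScalarTower K (WeylAlgebra K n) E]
    (c : WeylAlgebra K n) {S T : Set E}
    (h : ∀ x ∈ S, c • x ∈ Submodule.span K T) {y : E} (hy : y ∈ Submodule.span K S) :
    c • y ∈ Submodule.span K T :=
  (Submodule.span_le (p := (Submodule.span K T).comap (DistribSMul.toLinearMap K E c))).mpr
    h hy

variable {B} (hB : ∀ (θ : WMon n) (j : Fin m), B (θ, j) = wMonOf K n θ • B ((0 : WMon n), j))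
include hB

lemma x_smul_basis (a α β : Fin n → ℕ) (j : Fin m) :
    wMon K n a 0 • B ((α, β), j) = B ((a + α, β), j) := by
  rw [hB, hB (a + α, β), ← mul_smul, wMonOf, wMonOf, wMon_x_mul]

variable [IsScalarTower K (WeylAlgebra K n) E]

lemma dSingle_smul_basis (i : Fin n) (α β : Fin n → ℕ) (j : Fin m) :
    wMon K n 0 (Pi.single i 1) • B ((α, β), j)
      = B ((α, Pi.single i 1 + β), j) + (α i : K) • B ((α - Pi.single i 1, β), j) := by
  rw [hB, hB (α, _), hB (α - _, β), ← mul_smul, wMonOf, wMonOf, wMonOf, wMon_dSingle_mul,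
    add_smul, smul_assoc]

lemma x_smul_mem_lowerSpan (c : Fin n → ℕ) {a b : ℕ} {y : E} (hy : y ∈ lowerSpan B a b) :
    wMon K n c 0 • y ∈ lowerSpan B ((∑ i, c i) + a) b := by
  refine smul_mem_span_of_forall_smul_mem _ ?_ hy
  rintro _ ⟨⟨⟨α, β⟩, j⟩, ⟨hα, hβ⟩, rfl⟩
  rw [x_smul_basis hB]
  exact basis_mem_lowerSpan B (by simpa [ordX, Finset.sum_add_distrib] using hα) hβ

lemma dSingle_smul_mem_lowerSpan (i : Fin n) {a b : ℕ} {y : E} (hy : y ∈ lowerSpan B a b) :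
    wMon K n 0 (Pi.single i 1) • y ∈ lowerSpan B a (b + 1) := by
  refine smul_mem_span_of_forall_smul_mem _ ?_ hy
  rintro _ ⟨⟨⟨α, β⟩, j⟩, ⟨hα, hβ⟩, rfl⟩
  rw [dSingle_smul_basis hB]
  refine Submodule.add_mem _ (basis_mem_lowerSpan B hα ?_)
    (Submodule.smul_mem _ _ (basis_mem_lowerSpan B ((ordX_sub_single_le α β i).trans_lt hα) ?_))
  · exact (ordD_single_add α β i).trans_lt (Nat.succ_lt_succ hβ)
  · exact hβ.trans (Nat.lt_succ_self b)

lemma d_smul_basis_sub_mem_lowerSpan (b α β : Fin n → ℕ) (j : Fin m) :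
    wMon K n 0 b • B ((α, β), j) - B ((α, b + β), j)
      ∈ lowerSpan B (ordX (α, b + β)) (ordD (α, b + β)) := by
  induction b using Pi.induction_on_single_one_add generalizing α β with
  | zero => simp [wMon_zero_zero]
  | step i b ih =>
    have hsplit : wMon K n 0 (Pi.single i 1 + b) • B ((α, β), j)
          - B ((α, Pi.single i 1 + b + β), j)
        = (α i : K) • B ((α - Pi.single i 1, b + β), j)
          + wMon K n 0 (Pi.single i 1) • (wMon K n 0 b • B ((α, β), j) - B ((α, b + β), j)) := by
      rw [smul_sub, dSingle_smul_basis hB, wMon_d_add, mul_smul, add_assoc]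
      abel
    have hD : ordD (α, Pi.single i 1 + b + β) = ordD (α, b + β) + 1 := by
      rw [add_assoc, ordD_single_add]
    rw [hsplit, hD]
    refine Submodule.add_mem _ ?_ (dSingle_smul_mem_lowerSpan hB i (ih α β))
    rcases eq_or_ne (α i) 0 with hα | hα
    · simp [hα]
    · exact Submodule.smul_mem _ _
        (basis_mem_lowerSpan B (ordX_sub_single_lt _ hα) (Nat.lt_succ_self _))

lemma wMonOf_smul_basis_sub_mem_lowerSpan (θ : WMon n) (t : WTerm n m) :
    wMonOf K n θ • B t - B (termMulMon θ t)
      ∈ lowerSpan B (ordX (termMulMon θ t).1) (ordD (termMulMon θ t).1) := by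
  obtain ⟨⟨α, β⟩, j⟩ := t
  have hx := x_smul_mem_lowerSpan hB θ.1 (d_smul_basis_sub_mem_lowerSpan hB θ.2 α β j)
  rw [smul_sub, x_smul_basis hB] at hx
  rw [wMonOf_eq_mul, mul_smul]
  exact ordX_monMul θ (α, β) ▸ hx

end FreeModule

section Standard

variable {n m : ℕ}

lemma ordD_termQuot_add {u w : WTerm n m} (h : termDvd u w) :
    ordD (termQuot w u) + ordD u.1 = ordD w.1 := by
  conv_rhs => rw [← termMulMon_termQuot h]
  exact (ordD_monMul _ _).symm

def termBox (r s : ℕ) : Set (WTerm n m) := {t | ordX t.1 ≤ r ∧ ordD t.1 ≤ s}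

variable {K : Type*} [Field K] {E : Type*} [AddCommGroup E] [Module K E] {d : ℕ}

/-- The set `U_{rs}` of the paper. -/
def standardTerms (B : Module.Basis (WTerm n m) K E) (G : Fin d → E) (r s : ℕ) :
    Set (WTerm n m) :=
  {w | ordX w.1 ≤ r ∧ ordD w.1 ≤ s ∧
    ((∀ (i : Fin d) (u : WTerm n m), IsXLeader B (G i) u → ¬ termDvd u w) ∨
     (∀ (j : Fin d) (u v : WTerm n m), IsXLeader B (G j) u → IsDLeader B (G j) v →
        termDvd u w → s < ordD (termQuot w u) + ordD v.1))}

lemma standardTerms_subset_termBox (B : Module.Basis (WTerm n m) K E) (G : Fin d → E)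
    (r s : ℕ) : standardTerms B G r s ⊆ termBox r s :=
  fun _ hw => ⟨hw.1, hw.2.1⟩

end Standard

section Reduction

variable {K : Type*} [Field K] {n m : ℕ}
  {E : Type*} [AddCommGroup E] [Module (WeylAlgebra K n) E] [Module K E]
  [IsScalarTower K (WeylAlgebra K n) E] {B : Module.Basis (WTerm n m) K E}
  (hB : ∀ (θ : WMon n) (j : Fin m), B (θ, j) = wMonOf K n θ • B ((0 : WMon n), j))
include hB

lemma wMonOf_smul_sub_mem_span {g : E} {u v : WTerm n m} (hu : IsXLeader B g u)
    (hv : IsDLeader B g v) (θ : WMon n) :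
    wMonOf K n θ • g - B.repr g u • B (termMulMon θ u) ∈ Submodule.span K (B ''
      {τ | termLtX τ (termMulMon θ u) ∧ ordD τ.1 ≤ ordD θ + ordD v.1}) := by
  set S := Submodule.span K (B ''
      {τ | termLtX τ (termMulMon θ u) ∧ ordD τ.1 ≤ ordD θ + ordD v.1})
  have hord : ∀ t, B.repr g t ≠ 0 → ordX t.1 ≤ ordX u.1 ∧ ordD t.1 ≤ ordD v.1 := fun t ht =>
    ⟨(hu.2 t ht).elim (fun h => h ▸ le_rfl) ordX_le_of_termLtX,
      (hv.2 t ht).elim (fun h => h ▸ le_rfl) ordD_le_of_termLtD⟩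
  have hlow : ∀ t, B.repr g t ≠ 0 → wMonOf K n θ • B t - B (termMulMon θ t) ∈ S := by
    intro t ht
    refine Submodule.span_mono (Set.image_mono ?_) (wMonOf_smul_basis_sub_mem_lowerSpan hB θ t)
    rintro τ ⟨hx, hd⟩
    have htu := hord t ht
    simp only [termMulMon, ordX_monMul, ordD_monMul] at hx hd
    refine ⟨Or.inl (Or.inl ?_), ?_⟩
    · simp only [termMulMon, ordX_monMul]; omega
    · omega
  have hother : ∀ t ∈ (B.repr g).support.erase u, wMonOf K n θ • (B.repr g t • B t) ∈ S := by
    intro t htmem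
    obtain ⟨htu, htsupp⟩ := Finset.mem_erase.mp htmem
    have ht := Finsupp.mem_support_iff.mp htsupp
    rw [smul_comm, ← sub_add_cancel (wMonOf K n θ • B t) (B (termMulMon θ t))]
    refine Submodule.smul_mem _ _
      (Submodule.add_mem _ (hlow t ht) (Submodule.subset_span ⟨_, ⟨?_, ?_⟩, rfl⟩))
    · exact termLtX_termMulMon θ ((hu.2 t ht).resolve_left htu)
    · rw [termMulMon, ordD_monMul]; exact Nat.add_le_add_left (hord t ht).2 _
  have hsum : wMonOf K n θ • g
      = ∑ t ∈ (B.repr g).support, wMonOf K n θ • (B.repr g t • B t) := by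
    conv_lhs => rw [← B.linearCombination_repr g, Finsupp.linearCombination_apply, Finsupp.sum]
    exact Finset.smul_sum
  rw [hsum, ← Finset.add_sum_erase _ _ (Finsupp.mem_support_iff.mpr hu.1), smul_comm,
    add_sub_right_comm, ← smul_sub]
  exact Submodule.add_mem _ (Submodule.smul_mem _ _ (hlow u hu.1)) (Submodule.sum_mem _ hother)

end Reduction

section Basis

variable {K : Type*} [Field K] {n m : ℕ}
  {E : Type*} [AddCommGroup E] [Module (WeylAlgebra K n) E] [Module K E]
  [IsScalarTower K (WeylAlgebra K n) E]
  {M : Type*} [AddCommGroup M] [Module (WeylAlgebra K n) M] [Module K M]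
  [IsScalarTower K (WeylAlgebra K n) M]
  {B : Module.Basis (WTerm n m) K E} {π : E →ₗ[WeylAlgebra K n] M} {d : ℕ} {G : Fin d → E}

lemma linearIndependent_standardTerms (hG : IsXDGroebnerBasis B G (LinearMap.ker π)) (r s : ℕ) :
    LinearIndependent K (fun t : standardTerms B G r s => π (B t)) := by
  have hker : ∀ f ∈ Submodule.span K (B '' standardTerms B G r s), π f = 0 → f = 0 := by
    intro f hf hπf
    by_contra hf0
    obtain ⟨i, uf, vf, ui, vi, huf, hvf, hui, hvi, hdvd, hρ⟩ := hG.2.2 f hπf hf0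
    rw [B.mem_span_image] at hf
    obtain ⟨-, -, hP | hQ⟩ := hf (Finsupp.mem_support_iff.mpr huf.1)
    · exact hP i ui hui hdvd
    · have h1 := hQ i ui vi hui hvi hdvd
      have h2 := ordD_termQuot_add hdvd
      have h3 := (hf (Finsupp.mem_support_iff.mpr hvf.1)).2.1
      omega
  have hBU := B.linearIndependent.comp _ (Subtype.val_injective (p := (· ∈ standardTerms B G r s)))
  refine hBU.map (f := π.restrictScalars K)
    (Submodule.disjoint_def.mpr fun f hf hπf => hker f ?_ hπf)
  rwa [Set.range_comp, Subtype.range_coe] at hf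

variable (hB : ∀ (θ : WMon n) (j : Fin m), B (θ, j) = wMonOf K n θ • B ((0 : WMon n), j))
include hB

lemma mem_span_standardTerms (hG : ∀ i, G i ∈ LinearMap.ker π) {r s : ℕ} (w : WTerm n m)
    (hbox : w ∈ termBox r s) :
    π (B w) ∈ Submodule.span K ((fun t => π (B t)) '' standardTerms B G r s) := by
  induction w using wellFounded_termLtX.induction with | _ w ih => ?_
  by_cases hwU : w ∈ standardTerms B G r s
  · exact Submodule.subset_span ⟨w, hwU, rfl⟩
  simp only [standardTerms, Set.mem_ofPred_eq, not_and, not_or, not_forall, not_lt] at hwU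
  obtain ⟨-, j, u, v, hu, hv, hdvd, hle⟩ := hwU hbox.1 hbox.2
  have hred := wMonOf_smul_sub_mem_span hB hu hv (termQuot w u)
  rw [termMulMon_termQuot hdvd] at hred
  have hπ : π.restrictScalars K (wMonOf K n (termQuot w u) • G j) = 0 := by
    simp [LinearMap.mem_ker.mp (hG j)]
  have hlead := Submodule.mem_map_of_mem (f := π.restrictScalars K) hred
  rw [Submodule.map_span, ← Set.image_comp, map_sub, hπ, zero_sub, Submodule.neg_mem_iff,
    map_smul] at hlead
  have hlower : Submodule.span K ((π.restrictScalars K ∘ B) ''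
      {τ | termLtX τ w ∧ ordD τ.1 ≤ ordD (termQuot w u) + ordD v.1})
      ≤ Submodule.span K ((fun t => π (B t)) '' standardTerms B G r s) := by
    refine Submodule.span_le.mpr ?_
    rintro _ ⟨τ, ⟨hlt, hτ⟩, rfl⟩
    exact ih τ hlt ⟨(ordX_le_of_termLtX hlt).trans hbox.1, hτ.trans hle⟩
  rw [← inv_smul_smul₀ hu.1 (π (B w))]
  exact Submodule.smul_mem _ _ (hlower hlead)

lemma span_standardTerms_eq (hG : ∀ i, G i ∈ LinearMap.ker π) (r s : ℕ) :
    Submodule.span K ((fun t => π (B t)) '' standardTerms B G r s)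
      = Submodule.span K ((fun t => π (B t)) '' termBox r s) :=
  le_antisymm (Submodule.span_mono (Set.image_mono (standardTerms_subset_termBox B G r s)))
    (Submodule.span_le.mpr <| by
      rintro _ ⟨w, hw, rfl⟩
      exact mem_span_standardTerms hB hG w hw)

end Basis

lemma biFil_eq_span_termBox (K : Type*) [Field K] (n : ℕ) (M : Type*) [AddCommGroup M]
    [Module (WeylAlgebra K n) M] [Module K M] [IsScalarTower K (WeylAlgebra K n) M]
    (m : ℕ) (f : Fin m → M) (r s : ℕ) :
    biFil K n M m f r s
      = Submodule.span K ((fun t : WTerm n m => wMonOf K n t.1 • f t.2) '' termBox r s) := by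
  unfold biFil
  congr 1
  ext x
  constructor
  · rintro ⟨α, β, j, hα, hβ, rfl⟩
    exact ⟨((α, β), j), ⟨hα, hβ⟩, rfl⟩
  · rintro ⟨⟨⟨α, β⟩, j⟩, ⟨hα, hβ⟩, rfl⟩
    exact ⟨α, β, j, hα, hβ, rfl⟩

theorem image_of_Urs_is_basis_general
    (K : Type*) [Field K] (n m : ℕ)
    (M : Type*) [AddCommGroup M] [Module (WeylAlgebra K n) M]
    [Module K M] [IsScalarTower K (WeylAlgebra K n) M]
    (fgen : Fin m → M)
    (E : Type*) [AddCommGroup E] [Module (WeylAlgebra K n) E]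
    [Module K E] [IsScalarTower K (WeylAlgebra K n) E]
    (B : Module.Basis (WTerm n m) K E)
    (hB : ∀ (θ : WMon n) (j : Fin m), B (θ, j) = wMonOf K n θ • B ((0 : WMon n), j))
    (π : E →ₗ[WeylAlgebra K n] M)
    (hπ : ∀ j : Fin m, π (B ((0 : WMon n), j)) = fgen j)
    (d : ℕ) (G : Fin d → E)
    (hG : IsXDGroebnerBasis B G (LinearMap.ker π))
    (r s : ℕ) (U : Set (WTerm n m))
    (hU : U = {w : WTerm n m | ordX w.1 ≤ r ∧ ordD w.1 ≤ s ∧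
      ((∀ (i : Fin d) (u : WTerm n m), IsXLeader B (G i) u → ¬ termDvd u w) ∨
       (∀ (j : Fin d) (u v : WTerm n m), IsXLeader B (G j) u → IsDLeader B (G j) v →
          termDvd u w → s < ordD (termQuot w u) + ordD v.1))}) :
    LinearIndependent K (fun t : U => π (B (t : WTerm n m))) ∧
      Submodule.span K ((fun t => π (B t)) '' U) = biFil K n M m fgen r s := by
  obtain rfl : U = standardTerms B G r s := hU
  have hπB : (fun t => π (B t)) = fun t : WTerm n m => wMonOf K n t.1 • fgen t.2 :=
    funext fun t => by rw [hB, map_smul, hπ]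
  refine ⟨linearIndependent_standardTerms hG r s, ?_⟩
  rw [span_standardTerms_eq hB hG.2.1, biFil_eq_span_termBox, hπB]

/-- (Theorem 5.3.) Let `M` be generated by `f₁,…,f_m` over
`Aₙ(K)`, `π : E → M` the natural epimorphism from the free module `E` with
`π(eⱼ) = fⱼ`, `N = ker π`, and `G = {g₁,…,g_d}` an `(x,∂)`-Gröbner basis of
`N`. For `r, s ∈ ℕ` let `U_{rs}` be the set of terms `w` with `ord_x w ≤ r`,
`ord_∂ w ≤ s`, such that either `w` is a multiple of no `u_{gᵢ}`, or
`ord_∂(θ v_{gⱼ}) > s` whenever `w = θ u_{gⱼ}`. Then `π(U_{rs})` is a basis of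
the `K`-vector space `M_{rs} = Σᵢ W_{rs} fᵢ`. -/
theorem image_of_Urs_is_basis
    (K : Type*) [Field K] [CharZero K] (n m : ℕ) (hn : 1 ≤ n) (hm : 1 ≤ m)
    (M : Type*) [AddCommGroup M] [Module (WeylAlgebra K n) M]
    [Module K M] [IsScalarTower K (WeylAlgebra K n) M]
    (fgen : Fin m → M)
    (hgen : Submodule.span (WeylAlgebra K n) (Set.range fgen) = ⊤)
    (E : Type*) [AddCommGroup E] [Module (WeylAlgebra K n) E]
    [Module K E] [IsScalarTower K (WeylAlgebra K n) E]
    (B : Module.Basis (WTerm n m) K E)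
    (hB : ∀ (θ : WMon n) (j : Fin m), B (θ, j) = wMonOf K n θ • B ((0 : WMon n), j))
    (π : E →ₗ[WeylAlgebra K n] M)
    (hπ : ∀ j : Fin m, π (B ((0 : WMon n), j)) = fgen j)
    (d : ℕ) (G : Fin d → E)
    (hG : IsXDGroebnerBasis B G (LinearMap.ker π))
    (r s : ℕ) (U : Set (WTerm n m))
    (hU : U = {w : WTerm n m | ordX w.1 ≤ r ∧ ordD w.1 ≤ s ∧
      ((∀ (i : Fin d) (u : WTerm n m), IsXLeader B (G i) u → ¬ termDvd u w) ∨
       (∀ (j : Fin d) (u v : WTerm n m), IsXLeader B (G j) u → IsDLeader B (G j) v →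
          termDvd u w → s < ordD (termQuot w u) + ordD v.1))}) :
    LinearIndependent K (fun t : U => π (B (t : WTerm n m))) ∧
      Submodule.span K ((fun t => π (B t)) '' U) = biFil K n M m fgen r s :=
  image_of_Urs_is_basis_general K n m M fgen E B hB π hπ d G hG r s U hU
end
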